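/- arXiv:2401.04945 — 11 statements merged into one kernel-verified Lean document; each statement's English description precedes it below -/
import Mathlib

section
/- Let G be a countable group, A a finite set, F ⊆ G a finite symmetric subset containing the identity, and ε > 0. Let F' = F·F. Suppose φ: G → Sym(A) satisfies φ(1) = 1, d(φ(gh), φ(g)φ(h)) < ε for all g,h ∈ F' (normalized Hamming distance d), and d(1, φ(g)) > 1 − ε for all non-identity g ∈ F'. Then the set S of points s ∈ A such that (i) φ(g)s ≠ φ(h)s for all distinct g,h ∈ F and (ii) φ(gh)s = φ(g)φ(h)s for all g,h ∈ F, satisfies |S| > (1 − 4|F|²ε)|A|. -/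
open scoped Classical Pointwise

noncomputable def hDist {A : Type*} [Fintype A] (σ τ : Equiv.Perm A) : ℝ :=
  ((Finset.univ.filter fun a => σ a ≠ τ a).card : ℝ) / (Fintype.card A : ℝ)

/-- `φ : G → Sym(Fin n)` is an `(F, E, ε)`-orbit approximation of the action `α : G ↷ X`. -/
def IsOrbitApprox {G X : Type*} [Group G] {n : ℕ} (α : G →* Equiv.Perm X)
    (F : Finset G) (E : Finset X) (ε : ℝ) (φ : G → Equiv.Perm (Fin n)) : Prop :=
  ∃ (m : ℕ) (S : Finset (Fin n)) (π : Fin n → X → Fin m),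
    ((S.card : ℝ) > (1 - ε) * (n : ℝ)) ∧
    (∀ s ∈ S, Set.InjOn (π s) (E : Set X)) ∧
    (∀ s ∈ S, ∀ g ∈ F, ∀ x ∈ E, φ g s ∈ S → α g⁻¹ x ∈ E →
      π (φ g s) x = π s (α g⁻¹ x))

/-- Soficity of an action `α : G ↷ X` given as a homomorphism `G →* Sym(X)`. -/
def SoficAction {G X : Type*} [Group G] (α : G →* Equiv.Perm X) : Prop :=
  ∀ (F : Finset G) (E : Finset X) (ε : ℝ), 0 < ε →
    ∃ (n : ℕ) (φ : G → Equiv.Perm (Fin n)),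
      φ 1 = 1 ∧
      (∀ g ∈ F, ∀ h ∈ F, hDist (φ (g * h)) (φ g * φ h) < ε) ∧
      IsOrbitApprox α F E ε φ

/-- Soficity of a group. -/
def SoficGroup (G : Type*) [Group G] : Prop :=
  ∀ (F : Finset G) (ε : ℝ), 0 < ε →
    ∃ (n : ℕ) (φ : G → Equiv.Perm (Fin n)),
      φ 1 = 1 ∧
      (∀ g ∈ F, ∀ h ∈ F, hDist (φ (g * h)) (φ g * φ h) < ε) ∧
      (∀ g ∈ F, g ≠ 1 → hDist 1 (φ g) > 1 - ε)


/-!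
Since `φ(g)` is injective, `φ(g)s = φ(h)s` forces `φ(g⁻¹h)s = s` unless
multiplicativity fails for the pair `(g, g⁻¹h) ∈ F' × F'` at `s`. Hence, for `g ≠ h`, the
coincidence set of `φ(g)` and `φ(h)` has fewer than `2ε|A|` points (a multiplicativity defect
plus the fixed points of `φ(g⁻¹h) ≠ 1`), and each pair `(g, h) ∈ F × F` is bad at fewer than
`3ε|A|` points. The union bound over the `|F|²` pairs gives `|S| ≥ (1 - 3|F|²ε)|A|`, and the
slack `|F|²ε|A| > 0` makes the inequality strict.
-/

open Finset

section Hamming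

variable {A : Type*} [Fintype A] [Nonempty A] {ε : ℝ}

lemma card_filter_ne_lt_of_hDist_lt {σ τ : Equiv.Perm A} (h : hDist σ τ < ε) :
    ((univ.filter fun a => σ a ≠ τ a).card : ℝ) < ε * Fintype.card A := by
  rwa [hDist, div_lt_iff₀ (by exact_mod_cast Fintype.card_pos)] at h

lemma card_filter_apply_eq_self_lt_of_lt_hDist_one {σ : Equiv.Perm A}
    (h : 1 - ε < hDist 1 σ) :
    ((univ.filter fun a => σ a = a).card : ℝ) < ε * Fintype.card A := by
  have hsplit : ((univ.filter fun a => σ a = a).card : ℝ)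
      + (univ.filter fun a => ¬ σ a = a).card = Fintype.card A := by
    exact_mod_cast card_filter_add_card_filter_not (s := univ) (fun a => σ a = a)
  have hmoved : univ.filter (fun a => (1 : Equiv.Perm A) a ≠ σ a)
      = univ.filter fun a => ¬ σ a = a := by
    ext a
    rw [mem_filter, mem_filter, Equiv.Perm.one_apply, ne_comm]
  rw [hDist, hmoved, lt_div_iff₀ (by exact_mod_cast Fintype.card_pos)] at h
  nlinarith

omit [Nonempty A] in
lemma filter_apply_eq_subset (σ τ ρ : Equiv.Perm A) :
    univ.filter (fun a => σ a = τ a)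
      ⊆ univ.filter (fun a => τ a ≠ (σ * ρ) a) ∪ univ.filter fun a => ρ a = a := by
  intro a ha
  rw [mem_filter] at ha
  rw [mem_union, mem_filter, mem_filter, Equiv.Perm.mul_apply, ← ha.2]
  by_cases hρ : ρ a = a
  · exact Or.inr ⟨mem_univ a, hρ⟩
  · exact Or.inl ⟨mem_univ a, fun h => hρ (σ.injective h).symm⟩

lemma card_filter_apply_eq_lt {σ τ ρ : Equiv.Perm A} (hmul : hDist τ (σ * ρ) < ε)
    (hsep : 1 - ε < hDist 1 ρ) :
    ((univ.filter fun a => σ a = τ a).card : ℝ) < 2 * ε * Fintype.card A := by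
  have hmul' := card_filter_ne_lt_of_hDist_lt hmul
  have hsep' := card_filter_apply_eq_self_lt_of_lt_hDist_one hsep
  have hsplit : ((univ.filter fun a => σ a = τ a).card : ℝ)
      ≤ (univ.filter fun a => τ a ≠ (σ * ρ) a).card + (univ.filter fun a => ρ a = a).card := by
    exact_mod_cast (card_le_card (filter_apply_eq_subset σ τ ρ)).trans (card_union_le _ _)
  linarith

end Hamming

lemma sub_card_mul_le_card_filter_forall_not {A ι : Type*} [Fintype A] (P : Finset ι)
    (bad : ι → A → Prop) {c : ℝ} (hc : ∀ i ∈ P, ((univ.filter (bad i)).card : ℝ) ≤ c) :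
    (Fintype.card A : ℝ) - P.card * c ≤ (univ.filter fun a => ∀ i ∈ P, ¬ bad i a).card := by
  have hgood : univ.filter (fun a => ∀ i ∈ P, ¬ bad i a)
      = univ \ P.biUnion fun i => univ.filter (bad i) := by
    ext a
    simp
  have hunion : ((P.biUnion fun i => univ.filter (bad i)).card : ℝ) ≤ P.card * c := by
    calc ((P.biUnion fun i => univ.filter (bad i)).card : ℝ)
        ≤ ∑ i ∈ P, ((univ.filter (bad i)).card : ℝ) := by exact_mod_cast card_biUnion_le
      _ ≤ P.card * c := by simpa using sum_le_card_nsmul P _ c hc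
  rw [hgood, card_univ_sdiff, Nat.cast_sub (card_le_univ _)]
  linarith

section AlmostAction

variable {G A : Type*} [Group G] [Fintype A] [Nonempty A] {F : Finset G} {ε : ℝ}
  {φ : G → Equiv.Perm A}

lemma card_filter_apply_eq_lt_of_ne (hsym : ∀ g ∈ F, g⁻¹ ∈ F) (h1F : (1 : G) ∈ F)
    (hmul : ∀ g ∈ F * F, ∀ h ∈ F * F, hDist (φ (g * h)) (φ g * φ h) < ε)
    (hsep : ∀ g ∈ F * F, g ≠ 1 → hDist 1 (φ g) > 1 - ε)
    {g h : G} (hg : g ∈ F) (hh : h ∈ F) (hgh : g ≠ h) :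
    ((univ.filter fun s => φ g s = φ h s).card : ℝ) < 2 * ε * Fintype.card A := by
  have hk : g⁻¹ * h ∈ F * F := mul_mem_mul (hsym g hg) hh
  have hk1 : g⁻¹ * h ≠ 1 := fun hk1 => hgh (inv_mul_eq_one.mp hk1)
  have hmul' := hmul g (subset_mul_left F h1F hg) _ hk
  rw [mul_inv_cancel_left] at hmul'
  exact card_filter_apply_eq_lt hmul' (hsep _ hk hk1)

def IsBadFor (φ : G → Equiv.Perm A) (p : G × G) (s : A) : Prop :=
  (p.1 ≠ p.2 ∧ φ p.1 s = φ p.2 s) ∨ φ (p.1 * p.2) s ≠ (φ p.1 * φ p.2) s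

lemma card_filter_isBadFor_le (hsym : ∀ g ∈ F, g⁻¹ ∈ F) (h1F : (1 : G) ∈ F) (hε : 0 ≤ ε)
    (hmul : ∀ g ∈ F * F, ∀ h ∈ F * F, hDist (φ (g * h)) (φ g * φ h) < ε)
    (hsep : ∀ g ∈ F * F, g ≠ 1 → hDist 1 (φ g) > 1 - ε)
    {p : G × G} (hp : p ∈ F ×ˢ F) :
    ((univ.filter (IsBadFor φ p)).card : ℝ) ≤ 3 * ε * Fintype.card A := by
  obtain ⟨g, h⟩ := p
  rw [mem_product] at hp
  have hcoinc : ((univ.filter fun s => g ≠ h ∧ φ g s = φ h s).card : ℝ)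
      ≤ 2 * ε * Fintype.card A := by
    by_cases hgh : g = h
    · rw [filter_false_of_mem fun s _ hs => hs.1 hgh, card_empty, Nat.cast_zero]
      positivity
    · rw [filter_congr fun s _ => and_iff_right hgh]
      exact (card_filter_apply_eq_lt_of_ne hsym h1F hmul hsep hp.1 hp.2 hgh).le
  have hdefect := card_filter_ne_lt_of_hDist_lt
    (hmul g (subset_mul_left F h1F hp.1) h (subset_mul_left F h1F hp.2))
  have hsub : univ.filter (IsBadFor φ (g, h))
      ⊆ univ.filter (fun s => g ≠ h ∧ φ g s = φ h s)
        ∪ univ.filter fun s => φ (g * h) s ≠ (φ g * φ h) s := by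
    intro s hs
    rw [mem_filter] at hs
    rw [mem_union, mem_filter, mem_filter]
    exact hs.2.imp (⟨mem_univ s, ·⟩) (⟨mem_univ s, ·⟩)
  have hsplit : ((univ.filter (IsBadFor φ (g, h))).card : ℝ)
      ≤ (univ.filter fun s => g ≠ h ∧ φ g s = φ h s).card
        + (univ.filter fun s => φ (g * h) s ≠ (φ g * φ h) s).card := by
    exact_mod_cast (card_le_card hsub).trans (card_union_le _ _)
  linarith

end AlmostAction

theorem stmt_0_general {G A : Type*} [Group G] [Fintype A] [Nonempty A]
    (F : Finset G) (hsym : ∀ g ∈ F, g⁻¹ ∈ F) (h1F : (1 : G) ∈ F)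
    (ε : ℝ) (hε : 0 < ε) (φ : G → Equiv.Perm A)
    (hmul : ∀ g ∈ F * F, ∀ h ∈ F * F, hDist (φ (g * h)) (φ g * φ h) < ε)
    (hsep : ∀ g ∈ F * F, g ≠ 1 → hDist 1 (φ g) > 1 - ε) :
    (((Finset.univ.filter fun s : A =>
        (∀ g ∈ F, ∀ h ∈ F, g ≠ h → φ g s ≠ φ h s) ∧
        (∀ g ∈ F, ∀ h ∈ F, φ (g * h) s = (φ g) ((φ h) s))).card : ℝ)
      > (1 - 4 * (F.card : ℝ) ^ 2 * ε) * (Fintype.card A : ℝ)) := by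
  have hbad := sub_card_mul_le_card_filter_forall_not (F ×ˢ F) (IsBadFor φ)
    fun _ hp => card_filter_isBadFor_le hsym h1F hε.le hmul hsep hp
  have hgood : (univ.filter fun s : A =>
        (∀ g ∈ F, ∀ h ∈ F, g ≠ h → φ g s ≠ φ h s) ∧
        (∀ g ∈ F, ∀ h ∈ F, φ (g * h) s = (φ g) ((φ h) s)))
      = univ.filter fun s => ∀ p ∈ F ×ˢ F, ¬ IsBadFor φ p s := by
    refine filter_congr fun s _ => ?_
    simp only [IsBadFor, Prod.forall, mem_product, not_or, not_and, not_not, ne_eq,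
      Equiv.Perm.mul_apply]
    exact ⟨fun ⟨hinj, hhom⟩ g h ⟨hg, hh⟩ => ⟨hinj g hg h hh, hhom g hg h hh⟩,
      fun H => ⟨fun g hg h hh => (H g h ⟨hg, hh⟩).1, fun g hg h hh => (H g h ⟨hg, hh⟩).2⟩⟩
  have hF : (0 : ℝ) < F.card := by exact_mod_cast card_pos.mpr ⟨1, h1F⟩
  have hA : (0 : ℝ) < Fintype.card A := by exact_mod_cast Fintype.card_pos
  rw [hgood]
  rw [card_product, Nat.cast_mul] at hbad
  nlinarith [mul_pos (mul_pos (mul_pos hF hF) hε) hA]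

theorem stmt_0 {G A : Type*} [Group G] [Countable G] [Fintype A] [Nonempty A]
    (F : Finset G) (hsym : ∀ g ∈ F, g⁻¹ ∈ F) (h1F : (1 : G) ∈ F)
    (ε : ℝ) (hε : 0 < ε) (φ : G → Equiv.Perm A) (hunital : φ 1 = 1)
    (hmul : ∀ g ∈ F * F, ∀ h ∈ F * F, hDist (φ (g * h)) (φ g * φ h) < ε)
    (hsep : ∀ g ∈ F * F, g ≠ 1 → hDist 1 (φ g) > 1 - ε) :
    (((Finset.univ.filter fun s : A =>
        (∀ g ∈ F, ∀ h ∈ F, g ≠ h → φ g s ≠ φ h s) ∧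
        (∀ g ∈ F, ∀ h ∈ F, φ (g * h) s = (φ g) ((φ h) s))).card : ℝ)
      > (1 - 4 * (F.card : ℝ) ^ 2 * ε) * (Fintype.card A : ℝ)) :=
  stmt_0_general F hsym h1F ε hε φ hmul hsep
end

section
/- Let G be a countable group, X a countable set, G₁ ⊆ G₂ ⊆ ⋯ an increasing sequence of subgroups of G with ∪ᵢ Gᵢ = G, and α: G ↷ X an action. If for every i the restriction of α to Gᵢ is sofic, then α is sofic. -/
open scoped Classical Pointwise

/-! A sofic approximation only ever looks at the finitely many group elements in `F`, so a sofic
approximation of the restriction to a subgroup `H ⊇ F`, extended by the identity off `H`, is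
already one for the whole action. An increasing exhausting sequence of subgroups swallows every
finite `F`. -/

theorem Directed.exists_finset_subset_of_forall_mem {G ι : Type*} [Group G] [Nonempty ι]
    {Gs : ι → Subgroup G} (hdir : Directed (· ≤ ·) Gs) (hunion : ∀ g : G, ∃ i, g ∈ Gs i)
    (F : Finset G) : ∃ i, ∀ g ∈ F, g ∈ Gs i := by
  choose ix hix using hunion
  obtain ⟨i, hi⟩ := hdir.finset_le (F.image ix)
  exact ⟨i, fun g hg => hi (ix g) (Finset.mem_image_of_mem ix hg) (hix g)⟩

namespace Subgroup

variable {G : Type*} [Group G] (H : Subgroup G) {n : ℕ}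

noncomputable def extendOne (ψ : H → Equiv.Perm (Fin n)) (g : G) : Equiv.Perm (Fin n) :=
  if hg : g ∈ H then ψ ⟨g, hg⟩ else 1

variable {H}

theorem extendOne_of_mem (ψ : H → Equiv.Perm (Fin n)) {g : G} (hg : g ∈ H) :
    H.extendOne ψ g = ψ ⟨g, hg⟩ :=
  dif_pos hg

theorem extendOne_one (ψ : H → Equiv.Perm (Fin n)) : H.extendOne ψ 1 = ψ 1 :=
  extendOne_of_mem ψ H.one_mem

theorem hDist_extendOne_mul_lt {F : Finset G} (hF : ∀ g ∈ F, g ∈ H)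
    {ψ : H → Equiv.Perm (Fin n)} {ε : ℝ}
    (hψ : ∀ g ∈ F.subtype (· ∈ H), ∀ h ∈ F.subtype (· ∈ H), hDist (ψ (g * h)) (ψ g * ψ h) < ε) :
    ∀ g ∈ F, ∀ h ∈ F,
      hDist (H.extendOne ψ (g * h)) (H.extendOne ψ g * H.extendOne ψ h) < ε := by
  intro g hg h hh
  rw [extendOne_of_mem ψ (hF g hg), extendOne_of_mem ψ (hF h hh),
    extendOne_of_mem ψ (H.mul_mem (hF g hg) (hF h hh))]
  exact hψ ⟨g, hF g hg⟩ (Finset.mem_subtype.2 hg) ⟨h, hF h hh⟩ (Finset.mem_subtype.2 hh)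

theorem isOrbitApprox_extendOne {X : Type*} {α : G →* Equiv.Perm X} {F : Finset G}
    (hF : ∀ g ∈ F, g ∈ H) {E : Finset X} {ε : ℝ} {ψ : H → Equiv.Perm (Fin n)}
    (hψ : IsOrbitApprox (α.comp H.subtype) (F.subtype (· ∈ H)) E ε ψ) :
    IsOrbitApprox α F E ε (H.extendOne ψ) := by
  obtain ⟨m, S, π, hS, hinj, hequiv⟩ := hψ
  refine ⟨m, S, π, hS, hinj, fun s hs g hg x hx hgs hgx => ?_⟩
  rw [extendOne_of_mem ψ (hF g hg)] at hgs ⊢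
  exact hequiv s hs ⟨g, hF g hg⟩ (Finset.mem_subtype.2 hg) x hx hgs hgx

end Subgroup

theorem SoficAction.of_forall_finset_subset_subgroup {G X : Type*} [Group G]
    {α : G →* Equiv.Perm X}
    (h : ∀ F : Finset G, ∃ H : Subgroup G, (∀ g ∈ F, g ∈ H) ∧ SoficAction (α.comp H.subtype)) :
    SoficAction α := by
  intro F E ε hε
  obtain ⟨H, hF, hH⟩ := h F
  obtain ⟨n, ψ, hψ1, hψmul, hψorbit⟩ := hH (F.subtype (· ∈ H)) E ε hε
  exact ⟨n, H.extendOne ψ, (Subgroup.extendOne_one ψ).trans hψ1,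
    Subgroup.hDist_extendOne_mul_lt hF hψmul, Subgroup.isOrbitApprox_extendOne hF hψorbit⟩

theorem stmt_4_general {G X : Type*} [Group G]
    (α : G →* Equiv.Perm X) (Gs : ℕ → Subgroup G) (hmono : Monotone Gs)
    (hunion : ∀ g : G, ∃ i, g ∈ Gs i)
    (hsofic : ∀ i, SoficAction (α.comp (Gs i).subtype)) :
    SoficAction α := by
  refine SoficAction.of_forall_finset_subset_subgroup fun F => ?_
  obtain ⟨i, hi⟩ := hmono.directed_le.exists_finset_subset_of_forall_mem hunion F
  exact ⟨Gs i, hi, hsofic i⟩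

theorem stmt_4 {G X : Type*} [Group G] [Countable G] [Countable X]
    (α : G →* Equiv.Perm X) (Gs : ℕ → Subgroup G) (hmono : Monotone Gs)
    (hunion : ∀ g : G, ∃ i, g ∈ Gs i)
    (hsofic : ∀ i, SoficAction (α.comp (Gs i).subtype)) :
    SoficAction α :=
  stmt_4_general α Gs hmono hunion hsofic
end

section
/- Let G be a countable group, H a countable group, q: G → H a surjective group homomorphism, X a countable set, and β: H ↷ X a sofic action. Then the action α: G ↷ X defined by α(g) = β(q(g)) is sofic. -/
open scoped Classical Pointwise

theorem stmt_5 {G H X : Type*} [Group G] [Countable G] [Group H] [Countable H] [Countable X]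
    (q : G →* H) (hq : Function.Surjective q)
    (β : H →* Equiv.Perm X) (hβ : SoficAction β) :
    SoficAction (β.comp q) := by
  intro F E ε hε
  obtain ⟨n, φ, h1, hmul, m, S, π, hS, hinj, horb⟩ := hβ (F.image q) E ε hε
  refine ⟨n, fun g => φ (q g), by simpa using h1, ?_, m, S, π, hS, hinj, ?_⟩
  · intro g hg h hh
    simpa using hmul (q g) (Finset.mem_image_of_mem q hg) (q h) (Finset.mem_image_of_mem q hh)
  · intro s hs g hg x hx hgs hax
    have := horb s hs (q g) (Finset.mem_image_of_mem q hg) x hx hgs (by simpa using hax)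
    simpa using this
end

section
/- Let α: G ↷ X be an action of a countable group G on a countable set X. If the restriction of α to each G-orbit of X is sofic, then α is sofic. -/
open scoped Classical Pointwise

/-- restriction of the action to the orbit of `x₀` -/
def orbHom {G X : Type*} [Group G] (α : G →* Equiv.Perm X) (x₀ : X) :
    G →* Equiv.Perm {y : X // ∃ g : G, α g x₀ = y} where
  toFun g :=
    { toFun := fun y => ⟨α g y, by
        obtain ⟨k, hk⟩ := y.2
        exact ⟨g * k, by simp [map_mul, hk]⟩⟩
      invFun := fun y => ⟨α g⁻¹ y, by
        obtain ⟨k, hk⟩ := y.2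
        exact ⟨g⁻¹ * k, by simp [map_mul, hk]⟩⟩
      left_inv := fun y => by
        apply Subtype.ext
        simp [map_inv]
      right_inv := fun y => by
        apply Subtype.ext
        simp [map_inv] }
  map_one' := by
    apply Equiv.ext; intro y
    apply Subtype.ext
    simp
  map_mul' g₁ g₂ := by
    apply Equiv.ext; intro y
    apply Subtype.ext
    simp [map_mul]

lemma orbHom_apply {G X : Type*} [Group G] (α : G →* Equiv.Perm X) (x₀ : X) (g : G)
    (y : {y : X // ∃ g : G, α g x₀ = y}) : ((orbHom α x₀ g y : X)) = α g (y : X) := rfl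

lemma hDist_permCongr {A B : Type*} [Fintype A] [Fintype B] (e : A ≃ B) (σ τ : Equiv.Perm A) :
    hDist (e.permCongr σ) (e.permCongr τ) = hDist σ τ := by
  unfold hDist
  rw [Fintype.card_congr e.symm]
  congr 2
  apply Finset.card_bij (fun b _ => e.symm b)
  · intro b hb
    simp only [Finset.mem_filter, Finset.mem_univ, true_and] at hb ⊢
    intro hc
    apply hb
    simp [hc]
  · intro a _ b _ hab
    exact e.symm.injective hab
  · intro a ha
    refine ⟨e a, ?_, by simp⟩
    simp only [Finset.mem_filter, Finset.mem_univ, true_and] at ha ⊢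
    simpa using ha

lemma prod_count {ι : Type*} [Fintype ι] (n : ι → ℕ) (Gd : ∀ i, Finset (Fin (n i))) (δ : ℝ)
    (hδ1 : δ ≤ 1) (hg : ∀ i, (1 - δ) * (n i : ℝ) < ((Gd i).card : ℝ)) :
    (1 - (Fintype.card ι : ℝ) * δ) * ∏ i, (n i : ℝ) ≤ ∏ i, ((Gd i).card : ℝ) := by
  have h1 : ∀ i, (0:ℝ) ≤ (1 - δ) * (n i : ℝ) := fun i => mul_nonneg (by linarith) (Nat.cast_nonneg _)
  calc (1 - (Fintype.card ι : ℝ) * δ) * ∏ i, (n i : ℝ)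
      ≤ (1 - δ) ^ (Fintype.card ι) * ∏ i, (n i : ℝ) := by
        apply mul_le_mul_of_nonneg_right _ (Finset.prod_nonneg fun i _ => Nat.cast_nonneg _)
        have := one_add_mul_le_pow (a := -δ) (by linarith) (Fintype.card ι)
        calc 1 - (Fintype.card ι : ℝ) * δ = 1 + (Fintype.card ι : ℝ) * (-δ) := by ring
          _ ≤ (1 + -δ) ^ (Fintype.card ι) := this
          _ = (1 - δ) ^ (Fintype.card ι) := by ring_nf
    _ = ∏ i, ((1 - δ) * (n i : ℝ)) := by
        rw [Finset.prod_mul_distrib, Finset.prod_const, Finset.card_univ]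
    _ ≤ ∏ i, ((Gd i).card : ℝ) :=
        Finset.prod_le_prod (fun i _ => h1 i) (fun i _ => (hg i).le)

lemma hDist_lt_of_card_lt {A : Type*} [Fintype A] {σ τ : Equiv.Perm A} {c : ℝ}
    (h0 : 0 < (Fintype.card A : ℝ))
    (hc : ((Finset.univ.filter fun a => σ a ≠ τ a).card : ℝ) < c * (Fintype.card A : ℝ)) :
    hDist σ τ < c := by
  unfold hDist
  rw [div_lt_iff₀ h0]
  exact hc

lemma good_card_aux {A : Type*} [Fintype A] (p : A → Prop) (h1 : DecidablePred p)
    (h2 : DecidablePred fun a => ¬ p a) (δ : ℝ) (hn : 0 < Fintype.card A)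
    (hd : ((@Finset.filter A (fun a => ¬ p a) h2 Finset.univ).card : ℝ)
      < δ * (Fintype.card A : ℝ)) :
    (1 - δ) * (Fintype.card A : ℝ) < ((@Finset.filter A p h1 Finset.univ).card : ℝ) := by
  have hsplit := @Finset.card_filter_add_card_filter_not A Finset.univ p h1 h2
  rw [Finset.card_univ] at hsplit
  have hc : ((@Finset.filter A p h1 Finset.univ).card : ℝ)
      + ((@Finset.filter A (fun a => ¬ p a) h2 Finset.univ).card : ℝ)
      = (Fintype.card A : ℝ) := by exact_mod_cast congrArg (fun t : ℕ => (t : ℝ)) hsplit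
  nlinarith [hd, hc]

lemma good_finset {A : Type*} [Fintype A] (σ τ : Equiv.Perm A) {δ : ℝ}
    (hn : 0 < Fintype.card A) (hd : hDist σ τ < δ) :
    ∃ Gd : Finset A, ((1 - δ) * (Fintype.card A : ℝ) < (Gd.card : ℝ)) ∧
      ∀ a ∈ Gd, σ a = τ a := by
  classical
  unfold hDist at hd
  rw [div_lt_iff₀ (by exact_mod_cast hn)] at hd
  simp only [ne_eq] at hd
  refine ⟨Finset.univ.filter (fun a => σ a = τ a), ?_, fun a ha => (Finset.mem_filter.1 ha).2⟩
  exact good_card_aux _ _ _ δ hn hd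
theorem stmt_7 {G X : Type*} [Group G] [Countable G] [Countable X]
    (α : G →* Equiv.Perm X)
    (h : ∀ (x₀ : X) (β : G →* Equiv.Perm {y : X // ∃ g : G, α g x₀ = y}),
      (∀ (g : G) (y : {y : X // ∃ g : G, α g x₀ = y}), ((β g y : X)) = α g (y : X)) →
      SoficAction β) :
    SoficAction α := by
  intro F E ε hε
  -- replace ε by ε' := min ε (1/2)
  set ε' : ℝ := min ε (1/2) with hε'def
  have hε'pos : 0 < ε' := lt_min hε (by norm_num)
  have hε'le : ε' ≤ ε := min_le_left _ _
  have hε'half : ε' ≤ 1/2 := min_le_right _ _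
  suffices hsuff : ∃ (n : ℕ) (φ : G → Equiv.Perm (Fin n)),
      φ 1 = 1 ∧
      (∀ g ∈ F, ∀ h ∈ F, hDist (φ (g * h)) (φ g * φ h) < ε') ∧
      IsOrbitApprox α F E ε' φ by
    obtain ⟨n, φ, h1, h2, m, S, π, h3, h4, h5⟩ := hsuff
    refine ⟨n, φ, h1, fun g hg hh hhh => lt_of_lt_of_le (h2 g hg hh hhh) hε'le,
      m, S, π, lt_of_le_of_lt ?_ h3, h4, h5⟩
    have : (0:ℝ) ≤ (n : ℝ) := Nat.cast_nonneg n
    nlinarith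
  clear hε
  rcases E.eq_empty_or_nonempty with hEe | hE
  · subst hEe
    refine ⟨1, fun _ => 1, rfl, ?_, 1, Finset.univ, fun _ _ => (0 : Fin 1), ?_, ?_, ?_⟩
    · intro g _ h' _
      simpa [hDist] using hε'pos
    · simpa using hε'pos
    · intro s _
      simp
    · intro s _ g _ x hx
      simp at hx
  -- main case : E nonempty
  haveI : Nonempty X := ⟨hE.choose⟩
  set k : ℕ := E.card with hkdef
  have hk : 1 ≤ k := Finset.card_pos.2 hE
  set δ : ℝ := ε' / (k + 1) with hδdef
  have hkpos : (0:ℝ) < (k:ℝ) + 1 := by positivity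
  have hδpos : 0 < δ := div_pos hε'pos hkpos
  have hδ1 : δ ≤ 1 := by
    rw [hδdef, div_le_one hkpos]
    have : (1:ℝ) ≤ (k:ℝ) := by exact_mod_cast hk
    linarith
  have hkδ : (k : ℝ) * δ < ε' := by
    rw [hδdef, mul_div_assoc', div_lt_iff₀ hkpos]
    nlinarith
  -- injection into ℕ gives a linear order
  obtain ⟨f, hf⟩ := exists_injective_nat X
  letI : LinearOrder X := LinearOrder.lift' f hf
  -- sofic approximations on each orbit
  have H : ∀ x₀ : X, ∃ (n : ℕ) (φ : G → Equiv.Perm (Fin n)),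
      φ 1 = 1 ∧
      (∀ g ∈ F, ∀ h ∈ F, hDist (φ (g * h)) (φ g * φ h) < δ) ∧
      IsOrbitApprox (orbHom α x₀) F (E.subtype fun y => ∃ g : G, α g x₀ = y) δ φ :=
    fun x₀ => h x₀ (orbHom α x₀) (orbHom_apply α x₀) F _ δ hδpos
  choose n φ hone hmul happ using H
  choose m S π hS hinj hequiv using happ
  -- basic facts
  have hinvv : ∀ (g : G) (x : X), α g⁻¹ (α g x) = x := fun g x => by simp [map_inv]
  have hn1 : ∀ x : X, 0 < n x := by
    intro x
    rcases Nat.eq_zero_or_pos (n x) with h0 | h1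
    · exfalso
      have h2 : (S x).card ≤ n x := by
        have := Finset.card_le_card (Finset.subset_univ (S x))
        simpa using this
      have h3 := hS x
      have hc0 : (S x).card = 0 := by omega
      rw [hc0, h0] at h3
      norm_num at h3
    · exact h1
  -- orbit classes and representatives
  set C : X → Finset X := fun x => E.filter fun y => ∃ g : G, α g x = y with hCdef
  have hCeq : ∀ x y : X, (∃ g : G, α g x = y) → C x = C y := by
    rintro x y ⟨g, hg⟩
    ext z
    simp only [hCdef, Finset.mem_filter, and_congr_right_iff]
    intro _
    constructor
    · rintro ⟨g', hg'⟩
      refine ⟨g' * g⁻¹, ?_⟩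
      rw [map_mul, Equiv.Perm.mul_apply, ← hg, hinvv, hg']
    · rintro ⟨g', hg'⟩
      exact ⟨g' * g, by rw [map_mul, Equiv.Perm.mul_apply, hg, hg']⟩
  have hCne : ∀ x : X, x ∈ E → x ∈ C x := by
    intro x hx
    simp only [hCdef, Finset.mem_filter]
    exact ⟨hx, 1, by simp⟩
  set ι := {x : X // x ∈ E} with hιdef
  haveI : Nonempty ι := ⟨⟨hE.choose, hE.choose_spec⟩⟩
  have hcardι : Fintype.card ι = k := by
    rw [hkdef]; exact Fintype.card_coe E
  -- representative of the orbit of x (for x ∈ E)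
  set rep : (x : X) → x ∈ E → ι := fun x hx =>
    ⟨(C x).min' ⟨x, hCne x hx⟩, (Finset.mem_filter.1 (Finset.min'_mem _ _)).1⟩ with hrepdef
  have hrep1 : ∀ (x : X) (hx : x ∈ E), ∃ g : G, α g ((rep x hx : X)) = x := by
    intro x hx
    have hmem := Finset.min'_mem (C x) ⟨x, hCne x hx⟩
    obtain ⟨g, hg⟩ := (Finset.mem_filter.1 hmem).2
    refine ⟨g⁻¹, ?_⟩
    have hcc : (rep x hx : X) = (C x).min' ⟨x, hCne x hx⟩ := rfl
    rw [hcc, ← hg, hinvv]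
  have hrep2 : ∀ (x : X) (hx : x ∈ E) (y : X) (hy : y ∈ E), (∃ g : G, α g x = y) →
      rep x hx = rep y hy := by
    intro x hx y hy hxy
    have hCxy := hCeq x y hxy
    apply Subtype.ext
    show (C x).min' ⟨x, hCne x hx⟩ = (C y).min' ⟨y, hCne y hy⟩
    have hmy : (C y).min' ⟨y, hCne y hy⟩ ∈ C x := by
      rw [hCxy]; exact Finset.min'_mem _ _
    have hmx : (C x).min' ⟨x, hCne x hx⟩ ∈ C y := by
      rw [← hCxy]; exact Finset.min'_mem _ _
    exact le_antisymm (Finset.min'_le _ _ hmy) (Finset.min'_le _ _ hmx)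
  -- the product system
  set A := ∀ i : ι, Fin (n (i : X)) with hAdef
  haveI hfne : ∀ i : ι, Nonempty (Fin (n (i : X))) := fun i => ⟨⟨0, hn1 _⟩⟩
  set N := Fintype.card A with hNdef
  have hNnat : N = ∏ i : ι, n (i : X) := by
    show Fintype.card (∀ i : ι, Fin (n (i : X))) = ∏ i : ι, n (i : X)
    rw [Fintype.card_pi]
    simp
  have hNpos : 0 < N := by
    rw [hNnat]
    exact Finset.prod_pos fun i _ => hn1 _
  have hNR : (0:ℝ) < (N : ℝ) := by exact_mod_cast hNpos
  have hNprod : (N : ℝ) = ∏ i : ι, (n (i : X) : ℝ) := by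
    rw [hNnat]
    push_cast
    rfl
  set eA : A ≃ Fin N := Fintype.equivFin A with heAdef
  set Φ : G → Equiv.Perm A := fun g => Equiv.piCongrRight fun i => φ (i : X) g with hΦdef
  have hΦcoord : ∀ (g : G) (a : A) (i : ι), Φ g a i = φ (i : X) g (a i) := fun g a i => rfl
  set φF : G → Equiv.Perm (Fin N) := fun g => eA.permCongr (Φ g) with hφFdef
  -- counting helper
  have key : ∀ (Gd : ∀ i : ι, Finset (Fin (n (i : X)))),
      (∀ i : ι, (1 - δ) * (n (i : X) : ℝ) < ((Gd i).card : ℝ)) →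
      (1 - (k : ℝ) * δ) * (N : ℝ) ≤ ((Fintype.piFinset Gd).card : ℝ) := by
    intro Gd hGd
    calc (1 - (k : ℝ) * δ) * (N : ℝ)
        = (1 - (Fintype.card ι : ℝ) * δ) * ∏ i : ι, (n (i : X) : ℝ) := by
          rw [hcardι, hNprod]
      _ ≤ ∏ i : ι, ((Gd i).card : ℝ) := prod_count _ Gd δ hδ1 hGd
      _ = ((Fintype.piFinset Gd).card : ℝ) := by
          rw [Fintype.card_piFinset]
          push_cast
          rfl
  -- multiplicativity
  have hmulF : ∀ g ∈ F, ∀ h' ∈ F, hDist (φF (g * h')) (φF g * φF h') < ε' := by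
    intro g hg h' hh'
    have hcong : φF g * φF h' = eA.permCongr (Φ g * Φ h') := by
      apply Equiv.ext
      intro t
      simp [hφFdef, Equiv.permCongr_apply, Equiv.Perm.mul_apply]
    rw [hcong]
    have hφF' : φF (g * h') = eA.permCongr (Φ (g * h')) := rfl
    rw [hφF', hDist_permCongr]
    -- choose good sets coordinatewise
    have hgf : ∀ i : ι, ∃ Gd : Finset (Fin (n (i : X))),
        ((1 - δ) * (n (i : X) : ℝ) < (Gd.card : ℝ)) ∧
        ∀ b ∈ Gd, φ (i : X) (g * h') b = (φ (i : X) g * φ (i : X) h') b := by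
      intro i
      obtain ⟨Gd, h1, h2⟩ := good_finset (φ (i : X) (g * h')) (φ (i : X) g * φ (i : X) h')
        (by simpa using hn1 (i : X)) (hmul (i : X) g hg h' hh')
      refine ⟨Gd, ?_, h2⟩
      rwa [Fintype.card_fin] at h1
    choose Gd hGdcard hGdeq using hgf
    have hAcard : (0:ℝ) < (Fintype.card A : ℝ) := by
      rw [← hNdef]
      exact hNR
    refine hDist_lt_of_card_lt hAcard ?_
    refine lt_of_le_of_lt (b := (N : ℝ) - ((Fintype.piFinset Gd).card : ℝ)) ?_ ?_
    · -- the bad set is inside the complement of the product of good sets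
      have hsub : ∀ (Q : Finset A), (∀ a ∈ Q, Φ (g * h') a ≠ (Φ g * Φ h') a) →
          ((Q.card : ℝ) ≤ (N : ℝ) - ((Fintype.piFinset Gd).card : ℝ)) := by
        intro Q hQ
        have hQsub : Q ⊆ Finset.univ \ Fintype.piFinset Gd := by
          intro a ha
          rw [Finset.mem_sdiff]
          refine ⟨Finset.mem_univ _, fun hmem => hQ a ha ?_⟩
          funext i
          have hi := Fintype.mem_piFinset.1 hmem i
          exact hGdeq i (a i) hi
        have h1 := Finset.card_le_card hQsub
        have h2 : (Finset.univ \ Fintype.piFinset Gd).card = N - (Fintype.piFinset Gd).card := by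
          rw [Finset.card_sdiff_of_subset (Finset.subset_univ _), Finset.card_univ, ← hNdef]
        rw [h2] at h1
        have h3 : (Fintype.piFinset Gd).card ≤ N := by
          rw [hNdef, ← Finset.card_univ]
          exact Finset.card_le_card (Finset.subset_univ _)
        calc (Q.card : ℝ) ≤ (((N - (Fintype.piFinset Gd).card : ℕ)) : ℝ) := by exact_mod_cast h1
          _ = (N : ℝ) - ((Fintype.piFinset Gd).card : ℝ) := by
              rw [Nat.cast_sub h3]
      refine hsub _ (fun a ha => ?_)
      simp only [Finset.mem_filter] at ha
      exact ha.2
    · have hcount := key Gd hGdcard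
      have : (N : ℝ) - ((Fintype.piFinset Gd).card : ℝ) ≤ (k : ℝ) * δ * N := by nlinarith
      have h2 : (k : ℝ) * δ * N < ε' * N := by nlinarith
      have h3 : (ε' * (N:ℝ)) = ε' * (Fintype.card A : ℝ) := by rw [← hNdef]
      linarith
  -- the joint target set and injections
  set M : ℕ := Finset.univ.sup (fun i : ι => m (i : X)) with hMdef
  have hle : ∀ i : ι, m (i : X) ≤ M := by
    intro i
    rw [hMdef]
    exact Finset.le_sup (f := fun j : ι => m (j : X)) (Finset.mem_univ i)
  have hm1 : ∀ i : ι, 0 < m (i : X) := by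
    intro i
    have hel : Fin (m (i : X)) := π (i : X) ⟨0, hn1 _⟩ ⟨(i : X), ⟨1, by simp⟩⟩
    exact lt_of_le_of_lt (Nat.zero_le _) hel.isLt
  have hMpos : 0 < M := lt_of_lt_of_le (hm1 (Classical.arbitrary ι)) (hle _)
  haveI : Nonempty (Fin M) := ⟨⟨0, hMpos⟩⟩
  set MT := Fintype.card (ι × Fin M) with hMTdef
  set eC : (ι × Fin M) ≃ Fin MT := Fintype.equivFin (ι × Fin M) with heCdef
  set q : ∀ i : ι, Fin (n (i : X)) → X → Fin M := fun i s x =>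
    if hx : ∃ g : G, α g (i : X) = x then Fin.castLE (hle i) (π (i : X) s ⟨x, hx⟩)
    else ⟨0, hMpos⟩ with hqdef
  set πA : A → X → Fin MT := fun a x =>
    if hx : x ∈ E then eC (rep x hx, q (rep x hx) (a (rep x hx)) x)
    else eC (Classical.arbitrary _) with hπAdef
  set πF : Fin N → X → Fin MT := fun t x => πA (eA.symm t) x with hπFdef
  set SF : Finset (Fin N) := (Fintype.piFinset fun i : ι => S (i : X)).image eA with hSFdef
  refine ⟨N, φF, ?_, hmulF, MT, SF, πF, ?_, ?_, ?_⟩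
  · -- φF 1 = 1
    have hΦ1 : Φ 1 = 1 := by
      apply Equiv.ext
      intro a
      funext i
      show φ (i : X) 1 (a i) = a i
      rw [hone]
      rfl
    show eA.permCongr (Φ 1) = 1
    rw [hΦ1]
    apply Equiv.ext
    intro t
    simp [Equiv.permCongr_apply]
  · -- cardinality of SF
    have hcS : SF.card = (Fintype.piFinset fun i : ι => S (i : X)).card :=
      Finset.card_image_of_injective _ eA.injective
    have hpi := key (fun i => S (i : X)) (fun i => hS (i : X))
    have h1 : (1 - ε') * (N : ℝ) < (1 - (k : ℝ) * δ) * (N : ℝ) := by nlinarith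
    rw [hcS]
    calc (1 - ε') * (N : ℝ) < (1 - (k : ℝ) * δ) * (N : ℝ) := h1
      _ ≤ _ := hpi
  · -- injectivity
    intro t ht x hxmem y hymem heq2
    obtain ⟨a, haS, rfl⟩ := Finset.mem_image.1 ht
    have hx : x ∈ E := hxmem
    have hy : y ∈ E := hymem
    simp only [hπFdef, Equiv.symm_apply_apply] at heq2
    simp only [hπAdef] at heq2
    rw [dif_pos hx, dif_pos hy] at heq2
    have hpair := eC.injective heq2
    have hfst : rep x hx = rep y hy := congrArg Prod.fst hpair
    have hsnd := congrArg Prod.snd hpair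
    simp only at hsnd
    rw [← hfst] at hsnd
    have hpx : ∃ g : G, α g ((rep x hx : X)) = x := hrep1 x hx
    have hpy : ∃ g : G, α g ((rep x hx : X)) = y := by
      rcases hrep1 y hy with ⟨g, hg⟩
      refine ⟨g, ?_⟩
      rw [hfst]
      exact hg
    simp only [hqdef] at hsnd
    rw [dif_pos hpx, dif_pos hpy] at hsnd
    have hππ := Fin.castLE_injective _ hsnd
    have haSi : a (rep x hx) ∈ S ((rep x hx : X)) := Fintype.mem_piFinset.1 haS _
    have hxsub : (⟨x, hpx⟩ : {y : X // ∃ g : G, α g ((rep x hx : X)) = y}) ∈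
        (E.subtype fun y => ∃ g : G, α g ((rep x hx : X)) = y) := by
      rw [Finset.mem_subtype]
      exact hx
    have hysub : (⟨y, hpy⟩ : {y : X // ∃ g : G, α g ((rep x hx : X)) = y}) ∈
        (E.subtype fun y => ∃ g : G, α g ((rep x hx : X)) = y) := by
      rw [Finset.mem_subtype]
      exact hy
    have hxy := hinj _ _ haSi (Finset.mem_coe.2 hxsub) (Finset.mem_coe.2 hysub) hππ
    exact congrArg Subtype.val hxy
  · -- equivariance
    intro t ht g hg x hx hts hαx
    obtain ⟨a, haS, rfl⟩ := Finset.mem_image.1 ht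
    have hφeq : eA.symm (φF g (eA a)) = Φ g a := by
      simp [hφFdef, Equiv.permCongr_apply]
    have hΦgmem : Φ g a ∈ Fintype.piFinset (fun i : ι => S (i : X)) := by
      obtain ⟨b, hbS, hbe⟩ := Finset.mem_image.1 hts
      have hba : b = Φ g a := by
        apply eA.injective
        rw [hbe]
        simp [hφFdef, Equiv.permCongr_apply]
      rwa [hba] at hbS
    show πA (eA.symm (φF g (eA a))) x = πA (eA.symm (eA a)) (α g⁻¹ x)
    rw [hφeq, Equiv.symm_apply_apply]
    have hyE : α g⁻¹ x ∈ E := hαx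
    have hreps : rep x hx = rep (α g⁻¹ x) hyE := hrep2 x hx _ hyE ⟨g⁻¹, rfl⟩
    simp only [hπAdef]
    rw [dif_pos hx, dif_pos hyE]
    rw [← hreps]
    refine congrArg eC ?_
    refine Prod.ext rfl ?_
    have hpx : ∃ g' : G, α g' ((rep x hx : X)) = x := hrep1 x hx
    have hpy : ∃ g' : G, α g' ((rep x hx : X)) = α g⁻¹ x := by
      obtain ⟨g', hg'⟩ := hpx
      exact ⟨g⁻¹ * g', by rw [map_mul, Equiv.Perm.mul_apply, hg']⟩
    show q (rep x hx) (Φ g a (rep x hx)) x = q (rep x hx) (a (rep x hx)) (α g⁻¹ x)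
    simp only [hqdef]
    rw [dif_pos hpx, dif_pos hpy]
    refine congrArg (Fin.castLE _) ?_
    have hmem1 : a (rep x hx) ∈ S ((rep x hx : X)) := Fintype.mem_piFinset.1 haS _
    have hmem2 : φ ((rep x hx : X)) g (a (rep x hx)) ∈ S ((rep x hx : X)) :=
      Fintype.mem_piFinset.1 hΦgmem _
    have hxsub : (⟨x, hpx⟩ : {y : X // ∃ g' : G, α g' ((rep x hx : X)) = y}) ∈
        (E.subtype fun y => ∃ g' : G, α g' ((rep x hx : X)) = y) := by
      rw [Finset.mem_subtype]
      exact hx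
    have hαsub : ((orbHom α ((rep x hx : X))) g⁻¹) ⟨x, hpx⟩ ∈
        (E.subtype fun y => ∃ g' : G, α g' ((rep x hx : X)) = y) := by
      rw [Finset.mem_subtype]
      exact hyE
    exact hequiv ((rep x hx : X)) (a (rep x hx)) hmem1 g hg ⟨x, hpx⟩ hxsub hmem2 hαsub
end

section
/- Every action of a countable amenable group G on a countable set X is sofic. -/
open scoped Classical Pointwise

lemma myCardT12 {G : Type*} [Group G] [DecidableEq G] (A : Finset G) (g : G) :
    (A.filter fun a => g * a ∉ A).card = (A \ A.image fun a => g * a).card := by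
  have hinj : Function.Injective fun a : G => g * a := fun x y h => by
    simpa using h
  have himg : ((A.filter fun a => g * a ∉ A).image fun a => g * a)
      = (A.image fun a => g * a) \ A := by
    ext b
    simp only [Finset.mem_image, Finset.mem_filter, Finset.mem_sdiff]
    constructor
    · rintro ⟨a, ⟨ha, hna⟩, rfl⟩; exact ⟨⟨a, ha, rfl⟩, hna⟩
    · rintro ⟨⟨a, ha, rfl⟩, hb⟩; exact ⟨a, ⟨ha, hb⟩, rfl⟩
  have h1 : (A.filter fun a => g * a ∉ A).card
      = ((A.image fun a => g * a) \ A).card := by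
    rw [← himg, Finset.card_image_of_injective _ hinj]
  have h2 : (A.image fun a => g * a).card = A.card :=
    Finset.card_image_of_injective _ hinj
  have h3 := Finset.card_sdiff_add_card_inter (A.image fun a => g * a) A
  have h4 := Finset.card_sdiff_add_card_inter A (A.image fun a => g * a)
  rw [Finset.inter_comm] at h3
  omega

lemma myCardT1_le {G : Type*} [Group G] [DecidableEq G] (A : Finset G) (g : G) :
    (A.filter fun a => g * a ∉ A).card ≤ (symmDiff A (A.image fun a => g * a)).card := by
  have hinj : Function.Injective fun a : G => g * a := fun x y h => by
    simpa using h
  rw [← Finset.card_image_of_injective (A.filter fun a => g * a ∉ A) hinj]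
  apply Finset.card_le_card
  intro b hb
  simp only [Finset.mem_image, Finset.mem_filter] at hb
  obtain ⟨a, ⟨ha, hna⟩, rfl⟩ := hb
  rw [Finset.mem_symmDiff]
  exact Or.inr ⟨Finset.mem_image.mpr ⟨a, ha, rfl⟩, hna⟩

/-- Extension of the partial left translation by `g` on `A` to a self-map of `A`. -/
noncomputable def myf {G : Type*} [Group G] [DecidableEq G] (A : Finset G) (g : G)
    (θ : ↥(A.filter fun a => g * a ∉ A) ≃ ↥(A \ A.image fun a => g * a)) (a : ↥A) : ↥A :=
  if h : g * (a : G) ∈ A then ⟨g * a, h⟩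
  else ⟨(θ ⟨a, Finset.mem_filter.mpr ⟨a.2, h⟩⟩ : G),
        (Finset.mem_sdiff.mp (θ ⟨a, Finset.mem_filter.mpr ⟨a.2, h⟩⟩).2).1⟩

lemma myf_pos {G : Type*} [Group G] [DecidableEq G] (A : Finset G) (g : G)
    (θ : ↥(A.filter fun a => g * a ∉ A) ≃ ↥(A \ A.image fun a => g * a)) (a : ↥A)
    (h : g * (a : G) ∈ A) : myf A g θ a = ⟨g * a, h⟩ := by
  rw [myf, dif_pos h]

lemma myf_inj {G : Type*} [Group G] [DecidableEq G] (A : Finset G) (g : G)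
    (θ : ↥(A.filter fun a => g * a ∉ A) ≃ ↥(A \ A.image fun a => g * a)) :
    Function.Injective (myf A g θ) := by
  intro a b hab
  by_cases ha : g * (a : G) ∈ A <;> by_cases hb : g * (b : G) ∈ A
  · rw [myf, dif_pos ha, myf, dif_pos hb] at hab
    simp only [Subtype.mk.injEq] at hab
    exact Subtype.ext (mul_left_cancel hab)
  · exfalso
    rw [myf, dif_pos ha, myf, dif_neg hb] at hab
    simp only [Subtype.mk.injEq] at hab
    have h2 := (θ ⟨b, Finset.mem_filter.mpr ⟨b.2, hb⟩⟩).2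
    rw [Finset.mem_sdiff] at h2
    exact h2.2 (Finset.mem_image.mpr ⟨a, a.2, hab⟩)
  · exfalso
    rw [myf, dif_neg ha, myf, dif_pos hb] at hab
    simp only [Subtype.mk.injEq] at hab
    have h2 := (θ ⟨a, Finset.mem_filter.mpr ⟨a.2, ha⟩⟩).2
    rw [Finset.mem_sdiff] at h2
    exact h2.2 (Finset.mem_image.mpr ⟨b, b.2, hab.symm⟩)
  · rw [myf, dif_neg ha, myf, dif_neg hb] at hab
    simp only [Subtype.mk.injEq] at hab
    have h2 := θ.injective (Subtype.ext hab)
    simp only [Subtype.mk.injEq] at h2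
    exact Subtype.ext h2

lemma my_hDist_le {n : ℕ} (σ τ : Equiv.Perm (Fin n)) (D : Finset (Fin n))
    (hD : ∀ s, σ s ≠ τ s → s ∈ D) : hDist σ τ ≤ (D.card : ℝ) / n := by
  rw [hDist, Fintype.card_fin, Finset.filter_congr_decidable]
  gcongr
  intro s hs
  rw [Finset.mem_filter] at hs
  exact hD s hs.2

set_option maxHeartbeats 2000000 in
theorem stmt_8' {G X : Type*} [Group G] [Countable G] [Countable X]
    (hamen : ∀ (F : Finset G) (ε : ℝ), 0 < ε →
      ∃ A : Finset G, A.Nonempty ∧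
        ∀ g ∈ F, (((symmDiff A (A.image fun a => g * a)).card : ℝ) < ε * (A.card : ℝ)))
    (α : G →* Equiv.Perm X) :
    (∀ (F : Finset G) (E : Finset X) (ε : ℝ), 0 < ε →
    ∃ (n : ℕ) (φ : G → Equiv.Perm (Fin n)),
      φ 1 = 1 ∧
      (∀ g ∈ F, ∀ h ∈ F, hDist (φ (g * h)) (φ g * φ h) < ε) ∧
      (∃ (m : ℕ) (S : Finset (Fin n)) (π : Fin n → X → Fin m),
    ((S.card : ℝ) > (1 - ε) * (n : ℝ)) ∧
    (∀ s ∈ S, Set.InjOn (π s) (E : Set X)) ∧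
    (∀ s ∈ S, ∀ g ∈ F, ∀ x ∈ E, φ g s ∈ S → α g⁻¹ x ∈ E →
      π (φ g s) x = π s (α g⁻¹ x)))) := by
  intro F E ε hε
  obtain ⟨ι, hι⟩ := exists_injective_nat X
  set F' : Finset G := F ∪ F * F with hF'def
  set k : ℕ := F'.card with hkdef
  set ε' : ℝ := ε / (2 * (k + 1)) with hε'def
  have hε' : 0 < ε' := by positivity
  obtain ⟨A, hAne, hA⟩ := hamen F' ε' hε'
  set n := A.card with hndef
  have hn : 0 < n := Finset.card_pos.mpr hAne
  have hnR : (0 : ℝ) < n := by exact_mod_cast hn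
  set eA : Fin n ≃ ↥A := A.equivFin.symm with heAdef
  set T₁ : G → Finset G := fun g => A.filter fun a => g * a ∉ A with hT₁def
  set θ : ∀ g : G, ↥(A.filter fun a => g * a ∉ A) ≃ ↥(A \ A.image fun a => g * a) :=
    fun g => Finset.equivOfCardEq (myCardT12 A g) with hθdef
  have hfbij : ∀ g : G, Function.Bijective (myf A g (θ g)) := fun g =>
    Finite.injective_iff_bijective.mp (myf_inj A g (θ g))
  set φ : G → Equiv.Perm (Fin n) :=
    fun g => eA.permCongr.symm (Equiv.ofBijective (myf A g (θ g)) (hfbij g)) with hφdef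
  have hφapp : ∀ g s, φ g s = eA.symm (myf A g (θ g) (eA s)) := fun g s => rfl
  have hφkey : ∀ (g : G) (s : Fin n) (h : g * (eA s : G) ∈ A),
      φ g s = eA.symm ⟨g * (eA s : G), h⟩ := by
    intro g s h
    rw [hφapp, myf_pos A g (θ g) (eA s) h]
  refine ⟨n, φ, ?_, ?_, ?_⟩
  · -- φ 1 = 1
    ext s
    have h1 : (1 : G) * (eA s : G) ∈ A := by simpa using (eA s).2
    rw [hφkey 1 s h1]
    have : (⟨(1 : G) * (eA s : G), h1⟩ : ↥A) = eA s := Subtype.ext (one_mul _)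
    rw [this]
    simp
  · -- almost multiplicativity
    intro g hg h hh
    have hhF' : h ∈ F' := Finset.mem_union_left _ hh
    have hghF' : g * h ∈ F' := Finset.mem_union_right _ (Finset.mul_mem_mul hg hh)
    set D₁ : Finset (Fin n) := Finset.univ.filter fun s => h * (eA s : G) ∉ A with hD₁def
    set D₂ : Finset (Fin n) := Finset.univ.filter fun s => (g * h) * (eA s : G) ∉ A with hD₂def
    have hDsub : ∀ s : Fin n, φ (g * h) s ≠ (φ g * φ h) s → s ∈ D₁ ∪ D₂ := by
      intro s hs
      rw [Finset.mem_union, hD₁def, hD₂def, Finset.mem_filter, Finset.mem_filter]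
      by_contra hcon
      push_neg at hcon
      obtain ⟨h1, h2⟩ := hcon
      have hha : h * (eA s : G) ∈ A := h1 (Finset.mem_univ s)
      have hgha : (g * h) * (eA s : G) ∈ A := h2 (Finset.mem_univ s)
      apply hs
      rw [hφkey (g * h) s hgha]
      have h3 : (φ g * φ h) s = φ g (φ h s) := rfl
      rw [h3, hφkey h s hha]
      have hga : g * (eA (eA.symm ⟨h * (eA s : G), hha⟩) : G) ∈ A := by
        rw [Equiv.apply_symm_apply, ← mul_assoc]; exact hgha
      rw [hφkey g _ hga]
      congr 1
      apply Subtype.ext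
      simp [mul_assoc]
    have hcount : ∀ (u : G), (Finset.univ.filter fun s : Fin n => u * (eA s : G) ∉ A).card
        = (T₁ u).card := by
      intro u
      apply Finset.card_bij (fun s _ => (eA s : G))
      · intro s hs
        rw [Finset.mem_filter] at hs
        exact Finset.mem_filter.mpr ⟨(eA s).2, hs.2⟩
      · intro s₁ h₁ s₂ h₂ hss
        exact eA.injective (Subtype.ext hss)
      · intro b hb
        rw [hT₁def, Finset.mem_filter] at hb
        refine ⟨eA.symm ⟨b, hb.1⟩, ?_, by simp⟩
        rw [Finset.mem_filter]
        refine ⟨Finset.mem_univ _, ?_⟩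
        simpa using hb.2
    have hb1 : ((T₁ h).card : ℝ) < ε' * n := by
      calc ((T₁ h).card : ℝ) ≤ ((symmDiff A (A.image fun a => h * a)).card : ℝ) := by
            exact_mod_cast myCardT1_le A h
        _ < ε' * n := hA h hhF'
    have hb2 : ((T₁ (g * h)).card : ℝ) < ε' * n := by
      calc ((T₁ (g * h)).card : ℝ) ≤ ((symmDiff A (A.image fun a => (g * h) * a)).card : ℝ) := by
            exact_mod_cast myCardT1_le A (g * h)
        _ < ε' * n := hA (g * h) hghF'
    have hDcard : (((D₁ ∪ D₂).card : ℕ) : ℝ) < 2 * ε' * n := by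
      have h1 : (D₁ ∪ D₂).card ≤ D₁.card + D₂.card := Finset.card_union_le _ _
      have h2 : (((D₁ ∪ D₂).card : ℕ) : ℝ) ≤ (D₁.card : ℝ) + (D₂.card : ℝ) := by
        exact_mod_cast h1
      have h3 : (D₁.card : ℝ) = ((T₁ h).card : ℝ) := by exact_mod_cast hcount h
      have h4 : (D₂.card : ℝ) = ((T₁ (g * h)).card : ℝ) := by exact_mod_cast hcount (g * h)
      rw [h3, h4] at h2
      linarith
    have h2ε' : 2 * ε' ≤ ε := by
      have hk0 : (0:ℝ) ≤ (k:ℝ) := Nat.cast_nonneg k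
      have h1 : ε' ≤ ε / 2 := by
        rw [hε'def]
        exact div_le_div_of_nonneg_left hε.le (by norm_num) (by linarith)
      linarith
    calc hDist (φ (g * h)) (φ g * φ h) ≤ (((D₁ ∪ D₂).card : ℕ) : ℝ) / n :=
          my_hDist_le _ _ _ hDsub
      _ < ε := by
          rw [div_lt_iff₀ hnR]
          have hmul : (2 * ε') * n ≤ ε * n := mul_le_mul_of_nonneg_right h2ε' hnR.le
          linarith
  · -- orbit approximation
    set Bn : Finset ℕ := (A ×ˢ E).image fun p => ι ((α p.1⁻¹) p.2) with hBndef
    set m : ℕ := Bn.sup id + 1 with hmdef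
    have hmlt : ∀ a ∈ A, ∀ x ∈ E, ι ((α a⁻¹) x) < m := by
      intro a ha x hx
      have : ι ((α a⁻¹) x) ∈ Bn :=
        Finset.mem_image.mpr ⟨(a, x), Finset.mem_product.mpr ⟨ha, hx⟩, rfl⟩
      exact Nat.lt_succ_of_le (Finset.le_sup (f := id) this)
    set π : Fin n → X → Fin m := fun s x =>
      if h : ι ((α (eA s : G)⁻¹) x) < m then ⟨_, h⟩ else ⟨0, Nat.succ_pos _⟩ with hπdef
    set S : Finset (Fin n) := Finset.univ.filter fun s => ∀ g ∈ F, g * (eA s : G) ∈ A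
      with hSdef
    refine ⟨m, S, π, ?_, ?_, ?_⟩
    · -- cardinality of S
      have hcomp : (Finset.univ \ S) ⊆ F.biUnion fun g =>
          Finset.univ.filter fun s : Fin n => g * (eA s : G) ∉ A := by
        intro s hs
        rw [Finset.mem_sdiff, hSdef, Finset.mem_filter] at hs
        push_neg at hs
        obtain ⟨g, hgF, hga⟩ := hs.2 hs.1
        exact Finset.mem_biUnion.mpr ⟨g, hgF, Finset.mem_filter.mpr ⟨Finset.mem_univ _, hga⟩⟩
      have hcount : ∀ (u : G), (Finset.univ.filter fun s : Fin n => u * (eA s : G) ∉ A).card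
          = (T₁ u).card := by
        intro u
        apply Finset.card_bij (fun s _ => (eA s : G))
        · intro s hs
          rw [Finset.mem_filter] at hs
          exact Finset.mem_filter.mpr ⟨(eA s).2, hs.2⟩
        · intro s₁ h₁ s₂ h₂ hss
          exact eA.injective (Subtype.ext hss)
        · intro b hb
          rw [hT₁def, Finset.mem_filter] at hb
          refine ⟨eA.symm ⟨b, hb.1⟩, ?_, by simp⟩
          rw [Finset.mem_filter]
          refine ⟨Finset.mem_univ _, ?_⟩
          simpa using hb.2
      have hbad : ((Finset.univ \ S).card : ℝ) < ε * n := by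
        rcases Finset.eq_empty_or_nonempty F with hFe | hFne
        · have : Finset.univ \ S = ∅ := by
            rw [Finset.sdiff_eq_empty_iff_subset]
            intro s _
            rw [hSdef, Finset.mem_filter]
            exact ⟨Finset.mem_univ _, fun g hg => by simp [hFe] at hg⟩
          rw [this]
          simpa using mul_pos hε hnR
        · have h1 : ((Finset.univ \ S).card : ℝ) ≤
              ∑ g ∈ F, ((Finset.univ.filter fun s : Fin n => g * (eA s : G) ∉ A).card : ℝ) := by
            calc ((Finset.univ \ S).card : ℝ)
                ≤ ((F.biUnion fun g => Finset.univ.filter fun s : Fin n =>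
                    g * (eA s : G) ∉ A).card : ℝ) := by
                  exact_mod_cast Finset.card_le_card hcomp
              _ ≤ _ := by exact_mod_cast Finset.card_biUnion_le
          have h2 : ∑ g ∈ F, ((Finset.univ.filter fun s : Fin n =>
              g * (eA s : G) ∉ A).card : ℝ) < ∑ _g ∈ F, ε' * n := by
            apply Finset.sum_lt_sum_of_nonempty hFne
            intro g hg
            have hgF' : g ∈ F' := Finset.mem_union_left _ hg
            rw [hcount g]
            calc ((T₁ g).card : ℝ)
                ≤ ((symmDiff A (A.image fun a => g * a)).card : ℝ) := by
                  exact_mod_cast myCardT1_le A g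
              _ < ε' * n := hA g hgF'
          have h3 : ∑ _g ∈ F, ε' * (n : ℝ) = F.card * (ε' * n) := by
            rw [Finset.sum_const, nsmul_eq_mul]
          have hFk : (F.card : ℝ) ≤ k := by
            exact_mod_cast Finset.card_le_card (Finset.subset_union_left (s₂ := F * F))
          have hke : (F.card : ℝ) * ε' ≤ ε / 2 := by
            have hk0 : (0:ℝ) ≤ (k:ℝ) := Nat.cast_nonneg k
            have hpos : (0:ℝ) < 2 * ((k:ℝ) + 1) := by positivity
            rw [hε'def, mul_div_assoc']
            rw [div_le_div_iff₀ hpos (by norm_num : (0:ℝ) < 2)]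
            nlinarith [hε.le, hFk]
          calc ((Finset.univ \ S).card : ℝ) < F.card * (ε' * n) := by
                rw [← h3]; exact lt_of_le_of_lt h1 h2
            _ = (F.card * ε') * n := by ring
            _ ≤ (ε / 2) * n := by nlinarith
            _ < ε * n := by nlinarith
      have hScard : (S.card : ℝ) = n - ((Finset.univ \ S).card : ℝ) := by
        have h1 : (Finset.univ \ S).card = n - S.card := by
          rw [Finset.card_sdiff_of_subset (Finset.subset_univ S)]
          simp
        have h2 : S.card ≤ n := by
          have := Finset.card_le_card (Finset.subset_univ S)
          simpa using this
        rw [h1]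
        push_cast [Nat.cast_sub h2]
        ring
      rw [gt_iff_lt, hScard]
      nlinarith
    · -- injectivity
      intro s _ x hx y hy hxy
      have hsA : (eA s : G) ∈ A := (eA s).2
      have hxm := hmlt _ hsA x hx
      have hym := hmlt _ hsA y hy
      rw [hπdef] at hxy
      simp only [dif_pos hxm, dif_pos hym] at hxy
      have := Fin.val_eq_of_eq hxy
      exact (α (eA s : G)⁻¹).injective (hι this)
    · -- compatibility
      intro s hs g hg x hx hφs hαx
      have hsS : ∀ u ∈ F, u * (eA s : G) ∈ A := (Finset.mem_filter.mp hs).2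
      have hga : g * (eA s : G) ∈ A := hsS g hg
      have hcoe : (eA (φ g s) : G) = g * (eA s : G) := by
        rw [hφkey g s hga]
        simp
      have hval : ι ((α (eA (φ g s) : G)⁻¹) x) = ι ((α (eA s : G)⁻¹) ((α g⁻¹) x)) := by
        rw [hcoe, mul_inv_rev, map_mul, Equiv.Perm.mul_apply]
      rw [hπdef]
      simp only [hval]

theorem stmt_8 {G X : Type*} [Group G] [Countable G] [Countable X]
    (hamen : ∀ (F : Finset G) (ε : ℝ), 0 < ε →
      ∃ A : Finset G, A.Nonempty ∧
        ∀ g ∈ F, (((symmDiff A (A.image fun a => g * a)).card : ℝ) < ε * (A.card : ℝ)))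
    (α : G →* Equiv.Perm X) :
    SoficAction α := by
  intro F E ε hε
  obtain ⟨n, φ, h1, h2, h3⟩ := stmt_8' hamen α F E ε hε
  exact ⟨n, φ, h1, h2, h3⟩
end

section
/- Every action of a countable free group F (on countably many generators) on a countable set X is sofic. -/
open scoped Classical Pointwise

/-!
A free group acts on a finite set as soon as one permutation is chosen for each generator.
Given finite `F` and `E`, let `D ⊇ E` be the finite set of points visited when the reduced
words of the elements of `F` are applied, letter by letter, to points of `E`. Each generator
induces a partial bijection of `D`, which extends to a permutation of `D`; the resulting action
of the free group on `D` agrees with `α` along all these paths. The left regular action of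
`Perm D`, pulled back along it, is an exact homomorphism, and `π_a(x) = a⁻¹ x` makes it an
orbit approximation of `α`.
-/

open Equiv

lemma hDist_self {A : Type*} [Fintype A] (σ : Perm A) : hDist σ σ = 0 := by
  simp [hDist]

section Regular

variable {G X : Type*} [Group G]

def HasFiniteLocalModels (α : G →* Perm X) : Prop :=
  ∀ (F : Finset G) (E : Finset X), ∃ (D : Finset X) (β : G →* Perm D),
    E ⊆ D ∧ ∀ g ∈ F, ∀ y : D, (y : X) ∈ E → (β g y : X) = α g y

noncomputable def regularPermRep {D : Type*} [Fintype D] [DecidableEq D] (β : G →* Perm D) :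
    G →* Perm (Fin (Fintype.card (Perm D))) :=
  (Fintype.equivFin (Perm D)).permCongrHom.toMonoidHom.comp
    ((MulAction.toPermHom (Perm D) (Perm D)).comp β)

lemma regularPermRep_apply {D : Type*} [Fintype D] [DecidableEq D] (β : G →* Perm D) (g : G)
    (a : Fin (Fintype.card (Perm D))) :
    (Fintype.equivFin (Perm D)).symm (regularPermRep β g a) =
      β g * (Fintype.equivFin (Perm D)).symm a := by
  simp [regularPermRep, permCongrHom, permCongr_apply]

lemma isOrbitApprox_regularPermRep (α : G →* Perm X) {F : Finset G} {E D : Finset X}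
    (hED : E ⊆ D) (β : G →* Perm D)
    (hβ : ∀ g ∈ F, ∀ y : D, (y : X) ∈ E → (β g⁻¹ y : X) = α g⁻¹ y) {ε : ℝ} (hε : 0 < ε) :
    IsOrbitApprox α F E ε (regularPermRep β) := by
  -- `π a x` numbers `a⁻¹ x`, so `π (β g * a) x = π a (β g⁻¹ x)`; `Fin.last` is a spare value
  -- for points outside `D`.
  let π : Fin (Fintype.card (Perm D)) → X → Fin (Fintype.card D + 1) := fun a x =>
    if hx : x ∈ D then
      (Fintype.equivFin D (((Fintype.equivFin (Perm D)).symm a)⁻¹ ⟨x, hx⟩)).castSucc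
    else Fin.last _
  refine ⟨Fintype.card D + 1, Finset.univ, π, ?_, ?_, ?_⟩
  · have hpos : (0 : ℝ) < Fintype.card (Perm D) := by exact_mod_cast Fintype.card_pos
    rw [Finset.card_univ, Fintype.card_fin]
    linarith [mul_pos hε hpos]
  · intro a _ x hx x' hx' h
    simp only [π, dif_pos (hED hx), dif_pos (hED hx')] at h
    exact congrArg Subtype.val (((Fintype.equivFin (Perm D)).symm a)⁻¹.injective
      ((Fintype.equivFin D).injective (Fin.castSucc_injective _ h)))
  · intro a _ g hg x hx _ hgx
    simp only [π, dif_pos (hED hx), dif_pos (hED hgx), regularPermRep_apply, mul_inv_rev,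
      Perm.mul_apply, ← map_inv]
    rw [show β g⁻¹ ⟨x, hED hx⟩ = ⟨α g⁻¹ x, hED hgx⟩ from Subtype.ext (hβ g hg _ hx)]

theorem soficAction_of_hasFiniteLocalModels {α : G →* Perm X} (h : HasFiniteLocalModels α) :
    SoficAction α := by
  intro F E ε hε
  obtain ⟨D, β, hED, hβ⟩ := h F⁻¹ E
  refine ⟨_, regularPermRep β, map_one _, fun g _ g' _ => ?_,
    isOrbitApprox_regularPermRep α hED β (fun g hg => hβ g⁻¹ (Finset.inv_mem_inv hg)) hε⟩
  rw [map_mul, hDist_self]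
  exact hε

end Regular

section PartialPerm

variable {X : Type*}

def ExtendsPartialPerm {D : Finset X} (σ : Perm D) (τ : Perm X) : Prop :=
  ∀ y z : D, τ y = z → σ y = z

lemma ExtendsPartialPerm.inv {D : Finset X} {σ : Perm D} {τ : Perm X}
    (h : ExtendsPartialPerm σ τ) : ExtendsPartialPerm σ⁻¹ τ⁻¹ := by
  intro y z hyz
  rw [Perm.inv_eq_iff_eq, h z y (by simp [← hyz])]

lemma exists_extendsPartialPerm (D : Finset X) (τ : Perm X) :
    ∃ σ : Perm D, ExtendsPartialPerm σ τ := by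
  let e : {y : D // τ y ∈ D} ≃ {z : D // τ⁻¹ z ∈ D} :=
    { toFun := fun y => ⟨⟨τ y, y.2⟩, by simp [y.1.2]⟩
      invFun := fun z => ⟨⟨τ⁻¹ z, z.2⟩, by simp [z.1.2]⟩
      left_inv := fun y => by simp
      right_inv := fun z => by simp }
  refine ⟨e.extendSubtype, fun y z hyz => ?_⟩
  have hy : τ y ∈ D := hyz ▸ z.2
  rw [e.extendSubtype_apply_of_mem y hy]
  exact Subtype.ext hyz

end PartialPerm

namespace FreeGroup

variable {ι X : Type*}

lemma extendsPartialPerm_lift_mk_singleton (α : FreeGroup ι →* Perm X) {D : Finset X}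
    {σ : ι → Perm D} (hσ : ∀ i, ExtendsPartialPerm (σ i) (α (of i)))
    (p : ι × Bool) :
    ExtendsPartialPerm (lift σ (mk [p])) (α (mk [p])) := by
  obtain ⟨i, _ | _⟩ := p
  · rw [show mk [(i, false)] = (of i)⁻¹ from rfl, _root_.map_inv, _root_.map_inv,
      lift_apply_of]
    exact (hσ i).inv
  · rw [← of, lift_apply_of]
    exact hσ i

lemma lift_mk_apply_eq_of_tails_mem (α : FreeGroup ι →* Perm X) {D : Finset X}
    {σ : ι → Perm D}
    (hσ : ∀ i, ExtendsPartialPerm (σ i) (α (of i))) (w : List (ι × Bool)) (y : D)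
    (hw : ∀ t ∈ w.tails, α (mk t) y ∈ D) :
    (lift σ (mk w) y : X) = α (mk w) y := by
  induction w with
  | nil => simp [← one_eq_mk]
  | cons p t ih =>
    simp only [List.tails_cons, List.forall_mem_cons] at hw
    have hmk : mk (p :: t) = mk [p] * mk t := by
      rw [mul_mk]; rfl
    simp only [hmk, _root_.map_mul, Perm.mul_apply] at hw ⊢
    exact congrArg Subtype.val (extendsPartialPerm_lift_mk_singleton α hσ p _ ⟨_, hw.1⟩
      (by rw [ih hw.2]))

theorem hasFiniteLocalModels (α : FreeGroup ι →* Perm X) : HasFiniteLocalModels α := by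
  intro F E
  let D := E ∪ F.biUnion fun g =>
    g.toWord.tails.toFinset.biUnion fun t => E.image (α (mk t))
  choose σ hσ using fun i => exists_extendsPartialPerm D (α (of i))
  refine ⟨D, lift σ, Finset.subset_union_left, fun g hg y hy => ?_⟩
  have key := lift_mk_apply_eq_of_tails_mem α hσ g.toWord y fun t ht =>
    Finset.mem_union_right _ <| Finset.mem_biUnion.2 ⟨g, hg, Finset.mem_biUnion.2
      ⟨t, List.mem_toFinset.2 ht, Finset.mem_image_of_mem _ hy⟩⟩
  rwa [mk_toWord] at key

end FreeGroup

theorem stmt_9_general {ι X : Type*}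
    (α : FreeGroup ι →* Equiv.Perm X) :
    SoficAction α :=
  soficAction_of_hasFiniteLocalModels (FreeGroup.hasFiniteLocalModels α)

theorem stmt_9 {ι X : Type*} [Countable ι] [Countable X]
    (α : FreeGroup ι →* Equiv.Perm X) :
    SoficAction α :=
  stmt_9_general α
end

section
/- Let G be a sofic countable group and N ≤ G a locally finite subgroup. Then the left multiplication action of G on the coset space G/N is sofic. -/
open scoped Classical Pointwise

private lemma min'_congr {α : Type*} [LinearOrder α] {s t : Finset α} (h : s = t)
    (hs : s.Nonempty) (ht : t.Nonempty) : s.min' hs = t.min' ht := by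
  subst h
  rfl

private lemma card_le_of_hDist_lt {A : Type*} [Fintype A] {σ τ : Equiv.Perm A} {δ : ℝ}
    (hA : 0 < Fintype.card A) (h : hDist σ τ < δ)
    (s : Finset A) (hs : ∀ a ∈ s, σ a ≠ τ a) :
    (s.card : ℝ) ≤ δ * Fintype.card A := by
  have hsub : s ⊆ Finset.univ.filter (fun a => σ a ≠ τ a) := fun a ha =>
    Finset.mem_filter.mpr ⟨Finset.mem_univ a, hs a ha⟩
  have h1 : (s.card : ℝ) ≤ ((Finset.univ.filter fun a => σ a ≠ τ a).card : ℝ) := by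
    exact_mod_cast Finset.card_le_card hsub
  have hc : (0 : ℝ) < (Fintype.card A : ℝ) := by exact_mod_cast hA
  have h2 : ((Finset.univ.filter fun a => σ a ≠ τ a).card : ℝ) < δ * Fintype.card A := by
    unfold hDist at h
    exact (div_lt_iff₀ hc).mp h
  linarith

private lemma card_fix_le_of_hDist_gt {A : Type*} [Fintype A] {σ : Equiv.Perm A} {δ : ℝ}
    (hA : 0 < Fintype.card A) (h : 1 - δ < hDist 1 σ)
    (s : Finset A) (hs : ∀ a ∈ s, σ a = a) :
    (s.card : ℝ) ≤ δ * Fintype.card A := by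
  have hdisj : Disjoint s (Finset.univ.filter fun a => (1 : Equiv.Perm A) a ≠ σ a) := by
    rw [Finset.disjoint_left]
    intro a ha hafil
    exact (Finset.mem_filter.mp hafil).2 (by simp [hs a ha])
  have h1 : s.card + (Finset.univ.filter fun a => (1 : Equiv.Perm A) a ≠ σ a).card
      ≤ Fintype.card A := by
    rw [← Finset.card_union_of_disjoint hdisj]
    calc (s ∪ Finset.univ.filter fun a => (1 : Equiv.Perm A) a ≠ σ a).card
        ≤ (Finset.univ : Finset A).card := Finset.card_le_card (Finset.subset_univ _)
      _ = Fintype.card A := Finset.card_univ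
  have hc : (0 : ℝ) < (Fintype.card A : ℝ) := by exact_mod_cast hA
  have h2 : ((Finset.univ.filter fun a => (1 : Equiv.Perm A) a ≠ σ a).card : ℝ)
      > (1 - δ) * Fintype.card A := by
    unfold hDist at h
    exact (lt_div_iff₀ hc).mp h
  have h3 : (s.card : ℝ)
      + ((Finset.univ.filter fun a => (1 : Equiv.Perm A) a ≠ σ a).card : ℝ)
      ≤ (Fintype.card A : ℝ) := by exact_mod_cast h1
  nlinarith

theorem stmt_11 {G : Type*} [Group G] [Countable G] (hG : SoficGroup G)
    (N : Subgroup G)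
    (hLF : ∀ s : Finset G, (s : Set G) ⊆ (N : Set G) →
      ((Subgroup.closure (s : Set G) : Subgroup G) : Set G).Finite) :
    SoficAction (MulAction.toPermHom G (G ⧸ N)) := by
  intro F E ε hε
  by_cases hGt : ∀ g : G, g = 1
  · -- trivial group case
    refine ⟨1, fun _ => 1, rfl, ?_, 1, Finset.univ, fun _ _ => 0, ?_, ?_, ?_⟩
    · intro g _ h _
      have : (Finset.univ.filter fun a : Fin 1 =>
          (1 : Equiv.Perm (Fin 1)) a ≠ ((1 : Equiv.Perm (Fin 1)) * 1) a) = ∅ := by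
        simp
      simp [hDist, this, hε]
    · have : (Finset.univ : Finset (Fin 1)).card = 1 := by simp
      rw [this]
      push_cast
      nlinarith
    · intro s _ x _ y _ _
      have hx : ∀ z : G ⧸ N, z = ((1 : G) : G ⧸ N) := by
        intro z
        induction z using QuotientGroup.induction_on with
        | H a => rw [hGt a]
      rw [hx x, hx y]
    · intro s _ g _ x _ _ _
      rfl
  · -- nontrivial case
    push_neg at hGt
    obtain ⟨g₀, hg₀⟩ := hGt
    set rep : G ⧸ N → G := Quotient.out with hrep_def
    have hrep : ∀ x : G ⧸ N, ((rep x : G) : G ⧸ N) = x := fun x => QuotientGroup.out_eq' x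
    clear_value rep
    clear hrep_def
    -- the finite set of "cocycle" values
    set T : Finset G :=
      (((E ×ˢ E) ×ˢ F).image fun p => (rep p.1.1)⁻¹ * p.2 * rep p.1.2).filter (fun g => g ∈ N)
      with hT_def
    have hTN : (T : Set G) ⊆ (N : Set G) := by
      intro g hg
      rw [hT_def] at hg
      simp only [Finset.coe_filter, Set.mem_setOf_eq] at hg
      exact hg.2
    clear_value T
    have hHfin : ((Subgroup.closure (T : Set G) : Subgroup G) : Set G).Finite := hLF T hTN
    set H : Subgroup G := Subgroup.closure (T : Set G) with hH_def
    set Hf : Finset G := hHfin.toFinset with hHf_def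
    have hHf : ∀ g : G, g ∈ Hf ↔ g ∈ H := fun g => Set.Finite.mem_toFinset _
    have h1Hf : (1 : G) ∈ Hf := (hHf 1).mpr H.one_mem
    have hHmul : ∀ a ∈ Hf, ∀ b ∈ Hf, a * b ∈ Hf := fun a ha b hb =>
      (hHf _).mpr (H.mul_mem ((hHf a).mp ha) ((hHf b).mp hb))
    have hHinv : ∀ a ∈ Hf, a⁻¹ ∈ Hf := fun a ha => (hHf _).mpr (H.inv_mem ((hHf a).mp ha))
    have hTHf : ∀ g ∈ T, g ∈ Hf := fun g hg => (hHf g).mpr (Subgroup.subset_closure hg)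
    have hHN : ∀ g ∈ Hf, g ∈ N := fun g hg =>
      (Subgroup.closure_le N).mpr hTN ((hHf g).mp hg)
    clear_value Hf
    clear hHf_def hHf hH_def hHfin
    -- word sets
    set W₁ : Finset G := (Hf ×ˢ E).image (fun p => p.1⁻¹ * (rep p.2)⁻¹) with hW₁_def
    set W₂ : Finset G := (E ×ˢ Hf).image (fun p => rep p.1 * p.2) with hW₂_def
    set W₃ : Finset G :=
      (((E ×ˢ E) ×ˢ Hf ×ˢ Hf).image
        (fun p => (rep p.1.2 * p.2.2) * (p.2.1⁻¹ * (rep p.1.1)⁻¹))).filter (· ≠ 1)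
      with hW₃_def
    clear_value W₁ W₂ W₃
    set P : Finset (G × G) := W₁ ×ˢ F ∪ W₂ ×ˢ W₁ with hP_def
    set Fs : Finset G := W₁ ∪ W₂ ∪ W₃ ∪ F ∪ {g₀} with hFs_def
    clear_value P Fs
    set K : ℕ := P.card + W₃.card with hK_def
    clear_value K
    set ε' : ℝ := min (ε / (K + 1)) (1 / 2) with hε'_def
    clear_value ε'
    have hK1 : (0 : ℝ) < (K : ℝ) + 1 :=
      add_pos_of_nonneg_of_pos (Nat.cast_nonneg K) one_pos
    have hε'pos : 0 < ε' := by
      rw [hε'_def]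
      exact lt_min (div_pos hε hK1) (by norm_num)
    have hε'half : ε' ≤ 1 / 2 := by rw [hε'_def]; exact min_le_right _ _
    have hε'K : ε' ≤ ε / (K + 1) := by rw [hε'_def]; exact min_le_left _ _
    obtain ⟨n, φ, hφ1, hmul, hsep⟩ := hG Fs ε' hε'pos
    -- memberships in Fs
    have hW₁Fs : ∀ g ∈ W₁, g ∈ Fs := by
      intro g hg; rw [hFs_def]; simp only [Finset.mem_union]; tauto
    have hW₂Fs : ∀ g ∈ W₂, g ∈ Fs := by
      intro g hg; rw [hFs_def]; simp only [Finset.mem_union]; tauto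
    have hW₃Fs : ∀ g ∈ W₃, g ∈ Fs := by
      intro g hg; rw [hFs_def]; simp only [Finset.mem_union]; tauto
    have hFFs : ∀ g ∈ F, g ∈ Fs := by
      intro g hg; rw [hFs_def]; simp only [Finset.mem_union]; tauto
    have hg₀Fs : g₀ ∈ Fs := by
      rw [hFs_def]; simp only [Finset.mem_union, Finset.mem_singleton]; tauto
    -- n is positive
    have hn : 0 < n := by
      by_contra hn0
      have hn0' : n = 0 := Nat.eq_zero_of_not_pos hn0
      have h1 := hsep g₀ hg₀Fs hg₀
      have h2 : hDist (1 : Equiv.Perm (Fin n)) (φ g₀) = 0 := by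
        subst hn0'
        simp [hDist]
      rw [h2] at h1
      linarith
    have hnR : (0 : ℝ) < (n : ℝ) := by exact_mod_cast hn
    -- the good set
    set S : Finset (Fin n) := Finset.univ.filter
      (fun s => (∀ p ∈ P, φ (p.1 * p.2) s = φ p.1 (φ p.2 s)) ∧ ∀ w ∈ W₃, φ w s ≠ s)
      with hS_def
    have hSmem : ∀ s : Fin n, s ∈ S ↔
        ((∀ p ∈ P, φ (p.1 * p.2) s = φ p.1 (φ p.2 s)) ∧ ∀ w ∈ W₃, φ w s ≠ s) := by
      intro s
      rw [hS_def]
      simp only [Finset.mem_filter, Finset.mem_univ, true_and]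
    have hSmul : ∀ s ∈ S, ∀ p ∈ P, φ (p.1 * p.2) s = φ p.1 (φ p.2 s) := by
      intro s hs
      exact ((hSmem s).mp hs).1
    have hSfree : ∀ s ∈ S, ∀ w ∈ W₃, φ w s ≠ s := by
      intro s hs
      exact ((hSmem s).mp hs).2
    -- cardinality estimate
    -- cardinality estimate
    have hnfin : 0 < Fintype.card (Fin n) := by rw [Fintype.card_fin]; exact hn
    have hScard : ((S.card : ℝ)) > (1 - ε) * (n : ℝ) := by
      have hbad : ∀ p ∈ P, ((Finset.univ.filter
          (fun s : Fin n => φ (p.1 * p.2) s ≠ φ p.1 (φ p.2 s))).card : ℝ) ≤ ε' * n := by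
        intro p hp
        have hp1 : p.1 ∈ Fs := by
          rw [hP_def] at hp
          rcases Finset.mem_union.mp hp with h | h
          · exact hW₁Fs _ (Finset.mem_product.mp h).1
          · exact hW₂Fs _ (Finset.mem_product.mp h).1
        have hp2 : p.2 ∈ Fs := by
          rw [hP_def] at hp
          rcases Finset.mem_union.mp hp with h | h
          · exact hFFs _ (Finset.mem_product.mp h).2
          · exact hW₁Fs _ (Finset.mem_product.mp h).2
        have h1 := card_le_of_hDist_lt hnfin (hmul p.1 hp1 p.2 hp2)
          (Finset.univ.filter (fun s : Fin n => φ (p.1 * p.2) s ≠ φ p.1 (φ p.2 s)))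
          (by
            intro a ha
            have := (Finset.mem_filter.mp ha).2
            simpa [Equiv.Perm.mul_apply] using this)
        rwa [Fintype.card_fin] at h1
      have hfix : ∀ w ∈ W₃,
          ((Finset.univ.filter (fun s : Fin n => φ w s = s)).card : ℝ) ≤ ε' * n := by
        intro w hw
        have hw1 : w ≠ 1 := by
          rw [hW₃_def] at hw
          exact (Finset.mem_filter.mp hw).2
        have h1 := card_fix_le_of_hDist_gt hnfin (hsep w (hW₃Fs w hw) hw1)
          (Finset.univ.filter (fun s : Fin n => φ w s = s))
          (fun a ha => (Finset.mem_filter.mp ha).2)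
        rwa [Fintype.card_fin] at h1
      -- the bad set is small
      have hsub : Finset.univ.filter (fun s : Fin n =>
            ¬ ((∀ p ∈ P, φ (p.1 * p.2) s = φ p.1 (φ p.2 s)) ∧ ∀ w ∈ W₃, φ w s ≠ s))
          ⊆ (P.biUnion (fun p => Finset.univ.filter
              (fun s : Fin n => φ (p.1 * p.2) s ≠ φ p.1 (φ p.2 s))))
            ∪ (W₃.biUnion (fun w => Finset.univ.filter (fun s : Fin n => φ w s = s))) := by
        intro s hs
        simp only [Finset.mem_filter, Finset.mem_univ, true_and] at hs
        rw [Finset.mem_union]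
        rcases not_and_or.mp hs with hA | hB
        · left
          push_neg at hA
          obtain ⟨p, hp, hps⟩ := hA
          exact Finset.mem_biUnion.mpr ⟨p, hp, by simp [hps]⟩
        · right
          push_neg at hB
          obtain ⟨w, hw, hws⟩ := hB
          exact Finset.mem_biUnion.mpr ⟨w, hw, by simp [hws]⟩
      have hcard1 : ((Finset.univ.filter (fun s : Fin n =>
            ¬ ((∀ p ∈ P, φ (p.1 * p.2) s = φ p.1 (φ p.2 s)) ∧ ∀ w ∈ W₃, φ w s ≠ s))).card : ℝ)
          ≤ (K : ℝ) * (ε' * n) := by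
        have c1 := Finset.card_le_card hsub
        have c2 := Finset.card_union_le
          (P.biUnion (fun p => Finset.univ.filter
              (fun s : Fin n => φ (p.1 * p.2) s ≠ φ p.1 (φ p.2 s))))
          (W₃.biUnion (fun w => Finset.univ.filter (fun s : Fin n => φ w s = s)))
        have c3 := Finset.card_biUnion_le (s := P)
          (t := fun p => Finset.univ.filter
            (fun s : Fin n => φ (p.1 * p.2) s ≠ φ p.1 (φ p.2 s)))
        have c4 := Finset.card_biUnion_le (s := W₃)
          (t := fun w => Finset.univ.filter (fun s : Fin n => φ w s = s))
        have c5 : (P.sum fun p => ((Finset.univ.filter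
            (fun s : Fin n => φ (p.1 * p.2) s ≠ φ p.1 (φ p.2 s))).card : ℝ))
            ≤ (P.card : ℝ) * (ε' * n) := by
          calc (P.sum fun p => ((Finset.univ.filter
              (fun s : Fin n => φ (p.1 * p.2) s ≠ φ p.1 (φ p.2 s))).card : ℝ))
              ≤ P.card • (ε' * n) := Finset.sum_le_card_nsmul _ _ _ hbad
            _ = (P.card : ℝ) * (ε' * n) := by rw [nsmul_eq_mul]
        have c6 : (W₃.sum fun w => ((Finset.univ.filter
            (fun s : Fin n => φ w s = s)).card : ℝ))
            ≤ (W₃.card : ℝ) * (ε' * n) := by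
          calc (W₃.sum fun w => ((Finset.univ.filter
              (fun s : Fin n => φ w s = s)).card : ℝ))
              ≤ W₃.card • (ε' * n) := Finset.sum_le_card_nsmul _ _ _ hfix
            _ = (W₃.card : ℝ) * (ε' * n) := by rw [nsmul_eq_mul]
        have c7 : ((Finset.univ.filter (fun s : Fin n =>
            ¬ ((∀ p ∈ P, φ (p.1 * p.2) s = φ p.1 (φ p.2 s)) ∧ ∀ w ∈ W₃, φ w s ≠ s))).card : ℕ)
            ≤ (P.sum fun p => (Finset.univ.filter
                (fun s : Fin n => φ (p.1 * p.2) s ≠ φ p.1 (φ p.2 s))).card)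
              + (W₃.sum fun w => (Finset.univ.filter (fun s : Fin n => φ w s = s)).card) :=
          le_trans c1 (le_trans c2 (Nat.add_le_add c3 c4))
        have c8 : ((Finset.univ.filter (fun s : Fin n =>
            ¬ ((∀ p ∈ P, φ (p.1 * p.2) s = φ p.1 (φ p.2 s)) ∧ ∀ w ∈ W₃, φ w s ≠ s))).card : ℝ)
            ≤ (P.sum fun p => ((Finset.univ.filter
                (fun s : Fin n => φ (p.1 * p.2) s ≠ φ p.1 (φ p.2 s))).card : ℝ))
              + (W₃.sum fun w => ((Finset.univ.filter
                (fun s : Fin n => φ w s = s)).card : ℝ)) := by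
          exact_mod_cast c7
        have c9 : ((P.card : ℝ)) * (ε' * n) + ((W₃.card : ℝ)) * (ε' * n)
            = ((P.card : ℝ) + (W₃.card : ℝ)) * (ε' * n) := by ring
        have c10 : ((K : ℝ)) = (P.card : ℝ) + (W₃.card : ℝ) := by
          rw [hK_def]; push_cast; ring
        rw [c10]
        linarith
      -- putting it together
      have h7 : S.card + (Finset.univ.filter (fun s : Fin n =>
            ¬ ((∀ p ∈ P, φ (p.1 * p.2) s = φ p.1 (φ p.2 s)) ∧ ∀ w ∈ W₃, φ w s ≠ s))).card
          = n := by
        rw [hS_def]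
        rw [Finset.card_filter_add_card_filter_not]
        simp
      have h8 : (S.card : ℝ) + ((Finset.univ.filter (fun s : Fin n =>
            ¬ ((∀ p ∈ P, φ (p.1 * p.2) s = φ p.1 (φ p.2 s)) ∧ ∀ w ∈ W₃, φ w s ≠ s))).card : ℝ)
          = n := by exact_mod_cast h7
      have hKε : (K : ℝ) * (ε / (K + 1)) < ε := by
        have h5 : (K : ℝ) < K + 1 := lt_add_one _
        have h6 := mul_lt_mul_of_pos_right h5 (div_pos hε hK1)
        rwa [mul_div_cancel₀ _ (ne_of_gt hK1)] at h6
      have hε'bound : (K : ℝ) * (ε' * n) < ε * n := by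
        have h6 : (K : ℝ) * ε' ≤ (K : ℝ) * (ε / (K + 1)) :=
          mul_le_mul_of_nonneg_left hε'K (Nat.cast_nonneg K)
        calc (K : ℝ) * (ε' * n) = ((K : ℝ) * ε') * n := by ring
          _ ≤ ((K : ℝ) * (ε / (K + 1))) * n :=
              mul_le_mul_of_nonneg_right h6 (le_of_lt hnR)
          _ < ε * n := mul_lt_mul_of_pos_right hKε hnR
      nlinarith
    -- the coding maps
    have hne : ∀ (s : Fin n) (x : G ⧸ N),
        (Hf.image (fun h => φ (h⁻¹ * (rep x)⁻¹) s)).Nonempty :=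
      fun s x => Finset.Nonempty.image ⟨1, h1Hf⟩ _
    refine ⟨n, φ, hφ1, ?_, n, S,
      (fun s x => (Hf.image (fun h => φ (h⁻¹ * (rep x)⁻¹) s)).min' (hne s x)), hScard, ?_, ?_⟩
    · -- multiplicativity on F
      intro g hg h hh
      have h1 : hDist (φ (g * h)) (φ g * φ h) < ε' := hmul g (hFFs g hg) h (hFFs h hh)
      have h2 : ε / (K + 1) ≤ ε := by
        rw [div_le_iff₀ hK1]
        nlinarith [Nat.cast_nonneg (α := ℝ) K]
      linarith
    · -- injectivity
      intro s hs x hx y hy hpi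
      simp only [Finset.mem_coe] at hx hy
      by_contra hxy
      have hpi' : (Hf.image (fun h => φ (h⁻¹ * (rep x)⁻¹) s)).min' (hne s x)
          = (Hf.image (fun h => φ (h⁻¹ * (rep y)⁻¹) s)).min' (hne s y) := hpi
      have hmem1 := Finset.min'_mem (Hf.image (fun h => φ (h⁻¹ * (rep x)⁻¹) s)) (hne s x)
      have hmem2 := Finset.min'_mem (Hf.image (fun h => φ (h⁻¹ * (rep y)⁻¹) s)) (hne s y)
      rw [hpi'] at hmem1
      obtain ⟨h, hh, hhe⟩ := Finset.mem_image.mp hmem1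
      obtain ⟨h', hh', hhe'⟩ := Finset.mem_image.mp hmem2
      have heq : φ (h⁻¹ * (rep x)⁻¹) s = φ (h'⁻¹ * (rep y)⁻¹) s := hhe.trans hhe'.symm
      have hwW₃ : (rep y * h') * (h⁻¹ * (rep x)⁻¹) ∈ W₃ := by
        rw [hW₃_def]
        refine Finset.mem_filter.mpr ⟨Finset.mem_image.mpr ⟨((x, y), (h, h')), ?_, rfl⟩, ?_⟩
        · simp [Finset.mem_product, hx, hy, hh, hh']
        · intro hw1
          apply hxy
          have hw1' : (rep y * (h' * h⁻¹)) * (rep x)⁻¹ = 1 := by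
            rw [← hw1]; group
          have h9 : rep y * (h' * h⁻¹) = rep x := mul_inv_eq_one.mp hw1'
          calc x = ((rep x : G) : G ⧸ N) := (hrep x).symm
            _ = ((rep y * (h' * h⁻¹) : G) : G ⧸ N) := by rw [h9]
            _ = ((rep y : G) : G ⧸ N) := QuotientGroup.mk_mul_of_mem _
                  (N.mul_mem (hHN h' hh') (N.inv_mem (hHN h hh)))
            _ = y := hrep y
      have hP1 : (rep y * h', h⁻¹ * (rep x)⁻¹) ∈ P := by
        rw [hP_def]
        apply Finset.mem_union_right
        rw [Finset.mem_product]
        constructor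
        · rw [hW₂_def]
          exact Finset.mem_image.mpr ⟨(y, h'), Finset.mem_product.mpr ⟨hy, hh'⟩, rfl⟩
        · rw [hW₁_def]
          exact Finset.mem_image.mpr ⟨(h, x), Finset.mem_product.mpr ⟨hh, hx⟩, rfl⟩
      have hP2 : (rep y * h', h'⁻¹ * (rep y)⁻¹) ∈ P := by
        rw [hP_def]
        apply Finset.mem_union_right
        rw [Finset.mem_product]
        constructor
        · rw [hW₂_def]
          exact Finset.mem_image.mpr ⟨(y, h'), Finset.mem_product.mpr ⟨hy, hh'⟩, rfl⟩
        · rw [hW₁_def]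
          exact Finset.mem_image.mpr ⟨(h', y), Finset.mem_product.mpr ⟨hh', hy⟩, rfl⟩
      have hc1 : φ ((rep y * h') * (h⁻¹ * (rep x)⁻¹)) s
          = φ (rep y * h') (φ (h⁻¹ * (rep x)⁻¹) s) := hSmul s hs _ hP1
      have hc2 : φ ((rep y * h') * (h'⁻¹ * (rep y)⁻¹)) s
          = φ (rep y * h') (φ (h'⁻¹ * (rep y)⁻¹) s) := hSmul s hs _ hP2
      apply hSfree s hs _ hwW₃
      calc φ ((rep y * h') * (h⁻¹ * (rep x)⁻¹)) s
          = φ (rep y * h') (φ (h⁻¹ * (rep x)⁻¹) s) := hc1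
        _ = φ (rep y * h') (φ (h'⁻¹ * (rep y)⁻¹) s) := by rw [heq]
        _ = φ ((rep y * h') * (h'⁻¹ * (rep y)⁻¹)) s := hc2.symm
        _ = φ 1 s := by rw [show (rep y * h') * (h'⁻¹ * (rep y)⁻¹) = 1 from by group]
        _ = s := by rw [hφ1]; rfl
    · -- equivariance
      intro s hs g hg x hx hgs hyE
      have hy' : (MulAction.toPermHom G (G ⧸ N)) g⁻¹ x = g⁻¹ • x := rfl
      set y : G ⧸ N := g⁻¹ • x with hy_def
      have hyE' : y ∈ E := by rw [← hy']; exact hyE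
      have hmk1 : ((g * rep y : G) : G ⧸ N) = g • y := by
        conv_rhs => rw [← hrep y]
        rfl
      have hmkxy : ((rep x : G) : G ⧸ N) = ((g * rep y : G) : G ⧸ N) := by
        rw [hmk1, hrep x, hy_def, smul_inv_smul]
      have hh₀N : (rep x)⁻¹ * (g * rep y) ∈ N := QuotientGroup.eq.mp hmkxy
      have hh₀T : (rep x)⁻¹ * g * rep y ∈ T := by
        rw [hT_def]
        refine Finset.mem_filter.mpr ⟨Finset.mem_image.mpr ⟨((x, y), g), ?_, rfl⟩, ?_⟩
        · simp [Finset.mem_product, hx, hyE', hg]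
        · rw [mul_assoc]; exact hh₀N
      have hh₀Hf : (rep x)⁻¹ * g * rep y ∈ Hf := hTHf _ hh₀T
      have himg : Hf.image (fun h => φ (h⁻¹ * (rep x)⁻¹) (φ g s))
          = Hf.image (fun h => φ (h⁻¹ * (rep y)⁻¹) s) := by
        apply Finset.Subset.antisymm
        · intro b hb
          obtain ⟨h, hh, rfl⟩ := Finset.mem_image.mp hb
          refine Finset.mem_image.mpr
            ⟨((rep x)⁻¹ * g * rep y)⁻¹ * h, hHmul _ (hHinv _ hh₀Hf) _ hh, ?_⟩
          have hPm : (h⁻¹ * (rep x)⁻¹, g) ∈ P := by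
            rw [hP_def]
            apply Finset.mem_union_left
            rw [Finset.mem_product]
            refine ⟨?_, hg⟩
            rw [hW₁_def]
            exact Finset.mem_image.mpr ⟨(h, x), Finset.mem_product.mpr ⟨hh, hx⟩, rfl⟩
          have hc : φ ((h⁻¹ * (rep x)⁻¹) * g) s = φ (h⁻¹ * (rep x)⁻¹) (φ g s) :=
            hSmul s hs _ hPm
          rw [← hc]
          rw [show (((rep x)⁻¹ * g * rep y)⁻¹ * h)⁻¹ * (rep y)⁻¹
            = (h⁻¹ * (rep x)⁻¹) * g from by group]
        · intro b hb
          obtain ⟨h, hh, rfl⟩ := Finset.mem_image.mp hb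
          refine Finset.mem_image.mpr
            ⟨((rep x)⁻¹ * g * rep y) * h, hHmul _ hh₀Hf _ hh, ?_⟩
          have hPm : (((((rep x)⁻¹ * g * rep y) * h)⁻¹ * (rep x)⁻¹), g) ∈ P := by
            rw [hP_def]
            apply Finset.mem_union_left
            rw [Finset.mem_product]
            refine ⟨?_, hg⟩
            rw [hW₁_def]
            exact Finset.mem_image.mpr ⟨(((rep x)⁻¹ * g * rep y) * h, x),
              Finset.mem_product.mpr ⟨hHmul _ hh₀Hf _ hh, hx⟩, rfl⟩
          have hc : φ (((((rep x)⁻¹ * g * rep y) * h)⁻¹ * (rep x)⁻¹) * g) s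
              = φ ((((rep x)⁻¹ * g * rep y) * h)⁻¹ * (rep x)⁻¹) (φ g s) :=
            hSmul s hs _ hPm
          rw [← hc]
          rw [show (((rep x)⁻¹ * g * rep y) * h)⁻¹ * (rep x)⁻¹ * g
            = h⁻¹ * (rep y)⁻¹ from by group]
      exact min'_congr himg (hne (φ g s) x) (hne s y)
end

section
/- Let G be a sofic countable group. Then the left multiplication action of G on itself is a sofic action. -/
/-!
Take a sofic approximation `φ` of `G` on a finite set `K` containing `F`, `E`, `E⁻¹` and
`E * E⁻¹`. By a union bound, all but a small proportion of points `s` are good: `φ` is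
multiplicative at `s` on `K × K` and every nontrivial element of `K` moves `s`. At a good point
the orbit coordinates `π_s x := φ(x⁻¹) s` are injective on `E`, since `φ(x⁻¹) s = φ(y⁻¹) s`
would make `s` a fixed point of `φ(y x⁻¹)`, and they are equivariant, since
`φ(x⁻¹) (φ(g) s) = φ(x⁻¹ g) s = π_s (g⁻¹ x)`.
-/

open scoped Classical Pointwise

open Finset

section hDist

variable {A : Type*} [Fintype A]

lemma card_filter_ne_eq_hDist_mul (σ τ : Equiv.Perm A) :
    (#(univ.filter fun a => σ a ≠ τ a) : ℝ) = hDist σ τ * Fintype.card A := by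
  rcases (Fintype.card A).eq_zero_or_pos with hA | hA
  · have : IsEmpty A := Fintype.card_eq_zero_iff.mp hA
    simp
  · unfold hDist
    field_simp

lemma card_filter_eq_eq_one_sub_hDist_mul (σ τ : Equiv.Perm A) :
    (#(univ.filter fun a => σ a = τ a) : ℝ) = (1 - hDist σ τ) * Fintype.card A := by
  have hsplit := card_filter_add_card_filter_not (s := univ) fun a => σ a = τ a
  rw [card_univ] at hsplit
  have hne := card_filter_ne_eq_hDist_mul σ τ
  rw [sub_mul, one_mul, ← hne, ← hsplit]
  push_cast
  ring

end hDist

lemma card_biUnion_le_card_mul_real {ι α : Type*} [DecidableEq α] {s : Finset ι}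
    {t : ι → Finset α} {r : ℝ} (h : ∀ i ∈ s, (#(t i) : ℝ) ≤ r) :
    (#(s.biUnion t) : ℝ) ≤ #s * r :=
  calc (#(s.biUnion t) : ℝ) ≤ ∑ i ∈ s, (#(t i) : ℝ) := mod_cast card_biUnion_le
    _ ≤ #s * r := by simpa using sum_le_card_nsmul s _ r h

structure IsSoficApprox {G A : Type*} [Group G] [Fintype A] (K : Finset G) (δ : ℝ)
    (φ : G → Equiv.Perm A) : Prop where
  map_one : φ 1 = 1
  hDist_map_mul_lt : ∀ g ∈ K, ∀ h ∈ K, hDist (φ (g * h)) (φ g * φ h) < δ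
  hDist_one_map_gt : ∀ g ∈ K, g ≠ 1 → hDist 1 (φ g) > 1 - δ

noncomputable def goodPoints {G A : Type*} [Group G] [Fintype A] (K : Finset G)
    (φ : G → Equiv.Perm A) : Finset A :=
  univ.filter fun s => (∀ a ∈ K, ∀ b ∈ K, φ (a * b) s = φ a (φ b s)) ∧ ∀ c ∈ K, c ≠ 1 → φ c s ≠ s

lemma mem_goodPoints {G A : Type*} [Group G] [Fintype A] {K : Finset G} {φ : G → Equiv.Perm A}
    {s : A} : s ∈ goodPoints K φ ↔
      (∀ a ∈ K, ∀ b ∈ K, φ (a * b) s = φ a (φ b s)) ∧ ∀ c ∈ K, c ≠ 1 → φ c s ≠ s :=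
  mem_filter.trans (and_iff_right (mem_univ s))

lemma compl_goodPoints_subset {G A : Type*} [Group G] [Fintype A] {K : Finset G}
    {φ : G → Equiv.Perm A} : (goodPoints K φ)ᶜ ⊆
      (K ×ˢ K).biUnion (fun p => univ.filter fun s => φ (p.1 * p.2) s ≠ (φ p.1 * φ p.2) s) ∪
        (K.erase 1).biUnion (fun c => univ.filter fun s => (1 : Equiv.Perm A) s = φ c s) := by
  intro s hs
  rw [mem_compl, mem_goodPoints, not_and_or] at hs
  push Not at hs
  simp only [mem_union, mem_biUnion, mem_product, mem_erase]
  rcases hs with ⟨a, ha, b, hb, hab⟩ | ⟨c, hc, hc1, hcs⟩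
  · exact Or.inl ⟨(a, b), ⟨ha, hb⟩, mem_filter.mpr ⟨mem_univ _, hab⟩⟩
  · exact Or.inr ⟨c, ⟨hc1, hc⟩, mem_filter.mpr ⟨mem_univ _, hcs.symm⟩⟩

namespace IsSoficApprox

variable {G A : Type*} [Group G] [Fintype A] {K : Finset G} {δ : ℝ} {φ : G → Equiv.Perm A}

lemma card_pos (hφ : IsSoficApprox K δ φ) (hδ : δ ≤ 1) {g : G} (hgK : g ∈ K) (hg : g ≠ 1) :
    0 < Fintype.card A := by
  by_contra! hA
  have : IsEmpty A := Fintype.card_eq_zero_iff.mp (Nat.le_zero.mp hA)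
  have := hφ.hDist_one_map_gt g hgK hg
  simp [hDist] at this
  linarith

lemma card_goodPoints_ge (hφ : IsSoficApprox K δ φ) (hδ : 0 ≤ δ) :
    (Fintype.card A : ℝ) - (#K * #K + #K) * (δ * Fintype.card A) ≤ #(goodPoints K φ) := by
  have hmul : ∀ p ∈ K ×ˢ K,
      (#(univ.filter fun s => φ (p.1 * p.2) s ≠ (φ p.1 * φ p.2) s) : ℝ) ≤ δ * Fintype.card A := by
    rintro ⟨a, b⟩ hab
    rw [mem_product] at hab
    rw [card_filter_ne_eq_hDist_mul]
    gcongr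
    exact (hφ.hDist_map_mul_lt a hab.1 b hab.2).le
  have hfix : ∀ c ∈ K.erase 1, (#(univ.filter fun s => (1 : Equiv.Perm A) s = φ c s) : ℝ) ≤
      δ * Fintype.card A := by
    intro c hc
    rw [mem_erase] at hc
    rw [card_filter_eq_eq_one_sub_hDist_mul]
    gcongr
    linarith [hφ.hDist_one_map_gt c hc.2 hc.1]
  have hunion : (#(goodPoints K φ)ᶜ : ℝ) ≤
      #(K ×ˢ K) * (δ * Fintype.card A) + #(K.erase 1) * (δ * Fintype.card A) := by
    refine (Nat.cast_le.mpr ((card_le_card compl_goodPoints_subset).trans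
      (card_union_le _ _))).trans ?_
    push_cast
    exact add_le_add (card_biUnion_le_card_mul_real hmul) (card_biUnion_le_card_mul_real hfix)
  have herase : (#(K.erase 1) : ℝ) * (δ * Fintype.card A) ≤ #K * (δ * Fintype.card A) := by
    gcongr
    exact erase_subset 1 K
  have hcard : (#(goodPoints K φ)ᶜ : ℝ) + #(goodPoints K φ) = Fintype.card A :=
    mod_cast card_compl_add_card _
  rw [card_product, Nat.cast_mul] at hunion
  linarith

end IsSoficApprox

lemma eq_of_apply_inv_eq_of_mem_goodPoints {G A : Type*} [Group G] [Fintype A] {K : Finset G}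
    {φ : G → Equiv.Perm A} (h1 : φ 1 = 1) {s : A} (hs : s ∈ goodPoints K φ) {x y : G}
    (hx : x⁻¹ ∈ K) (hy : y ∈ K) (hy' : y⁻¹ ∈ K) (hyx : y * x⁻¹ ∈ K) (h : φ x⁻¹ s = φ y⁻¹ s) :
    x = y := by
  obtain ⟨hmul, hfree⟩ := mem_goodPoints.mp hs
  by_contra hxy
  apply hfree (y * x⁻¹) hyx (mul_inv_eq_one.not.mpr (Ne.symm hxy))
  calc φ (y * x⁻¹) s = φ y (φ x⁻¹ s) := hmul y hy x⁻¹ hx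
    _ = φ (y * y⁻¹) s := by rw [h, hmul y hy y⁻¹ hy']
    _ = s := by rw [mul_inv_cancel, h1, Equiv.Perm.one_apply]

lemma IsSoficApprox.isOrbitApprox_toPermHom {G : Type*} [Group G] {n : ℕ} {F E K : Finset G}
    {δ ε : ℝ} {φ : G → Equiv.Perm (Fin n)} (hφ : IsSoficApprox K δ φ) (hn : 0 < n)
    (hδ : 0 ≤ δ) (hδε : (#K * #K + #K) * δ < ε) (hF : F ⊆ K) (hE : E ⊆ K) (hEinv : E⁻¹ ⊆ K)
    (hEE : E * E⁻¹ ⊆ K) : IsOrbitApprox (MulAction.toPermHom G G) F E ε φ := by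
  have hinv {x : G} (hx : x ∈ E) : x⁻¹ ∈ K := hEinv (inv_mem_inv hx)
  refine ⟨n, goodPoints K φ, fun s x => φ x⁻¹ s, ?card, ?inj, ?equivariant⟩
  case card =>
    have hgood := hφ.card_goodPoints_ge hδ
    rw [Fintype.card_fin] at hgood
    have : 0 < (ε - (#K * #K + #K) * δ) * n := mul_pos (by linarith) (by exact_mod_cast hn)
    linarith
  case inj =>
    intro s hs x hx y hy h
    exact eq_of_apply_inv_eq_of_mem_goodPoints hφ.map_one hs (hinv hx) (hE hy) (hinv hy)
      (hEE (mul_mem_mul hy (inv_mem_inv hx))) h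
  case equivariant =>
    intro s hs g hg x hx _ _
    simp only [MulAction.coe_toPermHom, MulAction.toPerm_apply, smul_eq_mul, mul_inv_rev, inv_inv]
    exact ((mem_goodPoints.mp hs).1 x⁻¹ (hinv hx) g (hF hg)).symm

lemma SoficAction.of_subsingleton {G X : Type*} [Group G] [Subsingleton X]
    (α : G →* Equiv.Perm X) : SoficAction α := fun _ _ ε hε =>
  ⟨1, fun _ => 1, rfl, fun _ _ _ _ => by simpa [hDist] using hε,
    1, univ, fun _ _ => 0, by simpa using hε, fun _ _ => Set.injOn_of_subsingleton _ _,
    fun _ _ _ _ _ _ _ _ => rfl⟩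

theorem stmt_12_general {G : Type*} [Group G] (hG : SoficGroup G) :
    SoficAction (MulAction.toPermHom G G) := by
  rcases subsingleton_or_nontrivial G with _ | _
  · exact SoficAction.of_subsingleton _
  intro F E ε hε
  obtain ⟨g₀, hg₀⟩ := exists_ne (1 : G)
  set K := F ∪ E ∪ E⁻¹ ∪ E * E⁻¹ ∪ {g₀}
  set δ := min ε 1 / (#K * #K + #K + 1)
  have hδ : 0 < δ := by positivity
  have hδε : (#K * #K + #K) * δ < min ε 1 := by
    rw [mul_div_assoc', div_lt_iff₀ (by positivity)]
    nlinarith [lt_min hε one_pos]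
  have hδ_le : δ ≤ min ε 1 := div_le_self (by positivity) (le_add_of_nonneg_left (by positivity))
  obtain ⟨n, φ, h1, hmul, hsep⟩ := hG K δ hδ
  have hφ : IsSoficApprox K δ φ := ⟨h1, hmul, hsep⟩
  have hn : 0 < n := by
    simpa using hφ.card_pos (hδ_le.trans (min_le_right _ _)) (by simp [K]) hg₀
  have hδε' : δ ≤ ε := hδ_le.trans (min_le_left _ _)
  have hFK : F ⊆ K := fun g hg => by simp [K, hg]
  refine ⟨n, φ, h1, fun g hg h hh => (hmul g (hFK hg) h (hFK hh)).trans_le hδε',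
    hφ.isOrbitApprox_toPermHom hn hδ.le (hδε.trans_le (min_le_left _ _)) hFK ?_ ?_ ?_⟩
  all_goals intro x hx; simp [K, hx]

theorem stmt_12 {G : Type*} [Group G] [Countable G] (hG : SoficGroup G) :
    SoficAction (MulAction.toPermHom G G) :=
  stmt_12_general hG
end

section
/- Let G be a countable group. If the left multiplication action of G on itself is sofic, then G is a sofic group. -/
/-!
If `φ(g)` fixes a point `s` at which the orbit approximation is equivariant and injective on a
set containing `x` and `g⁻¹ x`, then equivariance gives `π_s(x) = π_s(g⁻¹ x)`, so `g⁻¹ x = x`.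
For the left translation action with `x = 1` this forces `g = 1`; hence for `g ≠ 1` the
permutation `φ(g)` moves every point of the set `S`, which has density `> 1 - ε`.
-/

open scoped Classical Pointwise

theorem lt_hDist_of_forall_ne {A : Type*} [Fintype A] {σ τ : Equiv.Perm A} {S : Finset A}
    {c : ℝ} (hS : c * Fintype.card A < S.card) (hne : ∀ s ∈ S, σ s ≠ τ s) :
    c < hDist σ τ := by
  have hA : 0 < Fintype.card A := by
    refine Nat.pos_of_ne_zero fun h0 => ?_
    have hS0 : S.card = 0 := Nat.eq_zero_of_le_zero (h0 ▸ S.card_le_univ)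
    simp [h0, hS0] at hS
  have hsub : S ⊆ Finset.univ.filter fun a => σ a ≠ τ a := fun s hs =>
    Finset.mem_filter.mpr ⟨Finset.mem_univ s, hne s hs⟩
  rw [hDist, lt_div_iff₀ (by exact_mod_cast hA)]
  exact hS.trans_le (by exact_mod_cast Finset.card_le_card hsub)

theorem IsOrbitApprox.one_sub_lt_hDist_one {G X : Type*} [Group G] {n : ℕ}
    {α : G →* Equiv.Perm X} {F : Finset G} {E : Finset X} {ε : ℝ} {φ : G → Equiv.Perm (Fin n)}
    (hφ : IsOrbitApprox α F E ε φ) {g : G} (hg : g ∈ F) {x : X} (hx : x ∈ E)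
    (hgx : α g⁻¹ x ∈ E) (hne : α g⁻¹ x ≠ x) :
    1 - ε < hDist 1 (φ g) := by
  obtain ⟨m, S, π, hS, hinj, hequiv⟩ := hφ
  refine lt_hDist_of_forall_ne (by simpa using hS) fun s hs hfix => hne ?_
  have hfix : φ g s = s := hfix.symm
  have hπ := hequiv s hs g hg x hx (hfix.symm ▸ hs) hgx
  rw [hfix] at hπ
  exact (hinj s hs hx hgx hπ).symm

theorem stmt_13_general {G : Type*} [Group G]
    (h : SoficAction (MulAction.toPermHom G G)) :
    SoficGroup G := by
  intro F ε hε
  obtain ⟨n, φ, hφ1, hmul, hφ⟩ := h F (insert 1 F⁻¹) ε hε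
  refine ⟨n, φ, hφ1, hmul, fun g hg hg1 => ?_⟩
  have hg₁ : MulAction.toPermHom G G g⁻¹ 1 = g⁻¹ := mul_one g⁻¹
  refine hφ.one_sub_lt_hDist_one hg (Finset.mem_insert_self 1 _) ?_ ?_
  · rw [hg₁]
    exact Finset.mem_insert_of_mem (by simpa using hg)
  · rw [hg₁]
    exact inv_ne_one.mpr hg1

theorem stmt_13 {G : Type*} [Group G] [Countable G]
    (h : SoficAction (MulAction.toPermHom G G)) :
    SoficGroup G :=
  stmt_13_general h
end

section
/- Let (X_n) be a sequence of nonempty finite sets with |X_n| → ∞, d_n the normalized Hamming distance on the symmetric groups Sym(X_n), and U a nonprincipal ultrafilter on ℕ. If G is a countable group admitting an injective group homomorphism into the metric ultraproduct ∏_U (Sym(X_n), d_n) such that any two distinct elements of G map to elements at distance 1, then G is sofic. -/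
open scoped Classical Pointwise

/-
With `d` the normalized Hamming distance, pick an index `n` in the `U`-large set on which
the finitely many defects `d(Φ(gh), Φ(g)Φ(h))` (for `g, h ∈ F` and for `g = h = 1`) are
below `ε/2` and the finitely many distances `d(Φ(1), Φ(g))` (for `1 ≠ g ∈ F`) exceed
`1 - ε`. The coordinate maps `g ↦ Φ(g)_n` then form a sofic approximation, except that
`Φ(1)_n` need not be the identity; replacing `Φ(g)_n` by `Φ(1)_n⁻¹ Φ(g)_n` fixes this at a
cost of `d(1, Φ(1)_n) = d(Φ(1)_n, Φ(1)_n Φ(1)_n) < ε/2`, by bi-invariance of `d`.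
-/

section hDist

variable {A : Type*} [Fintype A]

lemma hDist_comm (σ τ : Equiv.Perm A) : hDist σ τ = hDist τ σ := by
  simp only [hDist, ne_comm]

lemma hDist_triangle (σ τ υ : Equiv.Perm A) :
    hDist σ υ ≤ hDist σ τ + hDist τ υ := by
  rw [hDist, hDist, hDist, ← add_div]
  gcongr
  norm_cast
  refine (Finset.card_le_card fun a ha => ?_).trans (Finset.card_union_le _ _)
  simp only [Finset.mem_filter, Finset.mem_union, Finset.mem_univ, true_and] at ha ⊢
  by_contra! h
  exact ha (h.1.trans h.2)

lemma hDist_mul_left (ρ σ τ : Equiv.Perm A) : hDist (ρ * σ) (ρ * τ) = hDist σ τ := by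
  simp only [hDist, Equiv.Perm.mul_apply, ne_eq, EmbeddingLike.apply_eq_iff_eq]

lemma hDist_mul_right (ρ σ τ : Equiv.Perm A) : hDist (σ * ρ) (τ * ρ) = hDist σ τ := by
  unfold hDist
  congr 2
  exact Finset.card_equiv ρ fun _ => by
    rw [Finset.mem_filter_univ, Finset.mem_filter_univ]; rfl

lemma hDist_permCongrHom {B : Type*} [Fintype B] (e : A ≃ B) (σ τ : Equiv.Perm A) :
    hDist (e.permCongrHom σ) (e.permCongrHom τ) = hDist σ τ := by
  unfold hDist
  rw [Fintype.card_congr e.symm]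
  congr 2
  exact Finset.card_equiv e.symm (by simp [Equiv.permCongrHom, Equiv.permCongr_apply])

lemma hDist_inv_mul_mul_le (ρ σ τ υ : Equiv.Perm A) :
    hDist (ρ⁻¹ * υ) (ρ⁻¹ * σ * (ρ⁻¹ * τ)) ≤ hDist υ (σ * τ) + hDist 1 ρ := by
  have hcorr : hDist (σ * τ) (σ * ρ⁻¹ * τ) = hDist 1 ρ := by
    rw [mul_assoc, hDist_mul_left, ← one_mul τ, ← mul_assoc, hDist_mul_right, mul_one,
      ← hDist_mul_left ρ, mul_one, mul_inv_cancel, hDist_comm]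
  calc hDist (ρ⁻¹ * υ) (ρ⁻¹ * σ * (ρ⁻¹ * τ))
      = hDist υ (σ * ρ⁻¹ * τ) := by rw [mul_assoc ρ⁻¹, hDist_mul_left, mul_assoc]
    _ ≤ hDist υ (σ * τ) + hDist (σ * τ) (σ * ρ⁻¹ * τ) := hDist_triangle _ _ _
    _ = hDist υ (σ * τ) + hDist 1 ρ := by rw [hcorr]

lemma hDist_one_inv_mul (ρ σ : Equiv.Perm A) : hDist 1 (ρ⁻¹ * σ) = hDist ρ σ := by
  rw [← hDist_mul_left ρ, mul_one, mul_inv_cancel_left]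

end hDist

theorem soficGroup_of_exists_perm {G : Type*} [Group G]
    (h : ∀ (F : Finset G) (ε : ℝ), 0 < ε →
      ∃ (A : Type) (_ : Fintype A) (φ : G → Equiv.Perm A),
        φ 1 = 1 ∧
        (∀ g ∈ F, ∀ h ∈ F, hDist (φ (g * h)) (φ g * φ h) < ε) ∧
        (∀ g ∈ F, g ≠ 1 → hDist 1 (φ g) > 1 - ε)) :
    SoficGroup G := by
  intro F ε hε
  obtain ⟨A, _, φ, hone, hmul, hsep⟩ := h F ε hε
  let e := (Fintype.equivFin A).permCongrHom
  refine ⟨Fintype.card A, fun g => e (φ g), by simp only [hone, map_one], fun g hg h hh => ?_,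
    fun g hg hg1 => ?_⟩
  · rw [← map_mul, hDist_permCongrHom]
    exact hmul g hg h hh
  · rw [← map_one e, hDist_permCongrHom]
    exact hsep g hg hg1

theorem stmt_16_general {G : Type*} [Group G]
    (X : ℕ → Type) [∀ n, Fintype (X n)]
    (U : Ultrafilter ℕ)
    (Φ : G → ∀ n, Equiv.Perm (X n))
    (hhom : ∀ g h : G, Filter.Tendsto
      (fun n => hDist (Φ (g * h) n) (Φ g n * Φ h n)) (U : Filter ℕ) (nhds 0))
    (hsep : ∀ g h : G, g ≠ h → Filter.Tendsto
      (fun n => hDist (Φ g n) (Φ h n)) (U : Filter ℕ) (nhds 1)) :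
    SoficGroup G := by
  refine soficGroup_of_exists_perm fun F ε hε => ?_
  have hε2 : 0 < ε / 2 := half_pos hε
  have hunit : ∀ᶠ n in (U : Filter ℕ), hDist (Φ (1 * 1) n) (Φ 1 n * Φ 1 n) < ε / 2 :=
    (hhom 1 1).eventually_lt_const hε2
  have hmul : ∀ᶠ n in (U : Filter ℕ),
      ∀ g ∈ F, ∀ h ∈ F, hDist (Φ (g * h) n) (Φ g n * Φ h n) < ε / 2 :=
    (Filter.eventually_all_finset F).2 fun g _ => (Filter.eventually_all_finset F).2
      fun h _ => (hhom g h).eventually_lt_const hε2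
  have hfar : ∀ᶠ n in (U : Filter ℕ),
      ∀ g ∈ F, g ≠ 1 → 1 - ε < hDist (Φ 1 n) (Φ g n) := by
    refine (Filter.eventually_all_finset F).2 fun g _ => ?_
    rcases eq_or_ne g 1 with rfl | hg1
    · exact Filter.Eventually.of_forall fun _ h => absurd rfl h
    · exact ((hsep 1 g hg1.symm).eventually_const_lt (by linarith)).mono fun _ h _ => h
  obtain ⟨n, hunit, hmul, hfar⟩ := (hunit.and (hmul.and hfar)).exists
  have hdrift : hDist 1 (Φ 1 n) < ε / 2 := by
    rw [← hDist_mul_right (Φ 1 n), one_mul]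
    simpa only [mul_one] using hunit
  refine ⟨X n, inferInstance, fun g => (Φ 1 n)⁻¹ * Φ g n, inv_mul_cancel _,
    fun g hg h hh => ?_, fun g hg hg1 => ?_⟩
  · calc _ ≤ hDist (Φ (g * h) n) (Φ g n * Φ h n) + hDist 1 (Φ 1 n) :=
          hDist_inv_mul_mul_le _ _ _ _
      _ < ε / 2 + ε / 2 := add_lt_add (hmul g hg h hh) hdrift
      _ = ε := add_halves ε
  · rw [hDist_one_inv_mul]
    exact hfar g hg hg1

theorem stmt_16 {G : Type*} [Group G] [Countable G]
    (X : ℕ → Type) [∀ n, Fintype (X n)] [∀ n, Nonempty (X n)]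
    (hcard : Filter.Tendsto (fun n => Fintype.card (X n)) Filter.atTop Filter.atTop)
    (U : Ultrafilter ℕ) (hU : ∀ s : Set ℕ, s.Finite → s ∉ U)
    (Φ : G → ∀ n, Equiv.Perm (X n))
    (hhom : ∀ g h : G, Filter.Tendsto
      (fun n => hDist (Φ (g * h) n) (Φ g n * Φ h n)) (U : Filter ℕ) (nhds 0))
    (hsep : ∀ g h : G, g ≠ h → Filter.Tendsto
      (fun n => hDist (Φ g n) (Φ h n)) (U : Filter ℕ) (nhds 1)) :
    SoficGroup G :=
  stmt_16_general X U Φ hhom hsep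
end

section
/- Let G be a countable group, X a countable set, α: G ↷ X an action, and suppose α is sofic. Then for every ε > 0, finite F ⊆ G symmetric containing 1, and finite E ⊆ X, there exists a finite set A, a unital (F,ε)-multiplicative map φ: G → Sym(A), a finite set B, a subset S ⊆ A with |S| > (1−ε)|A|, and injective maps π_s: E ↪ B (s ∈ S) with the orbit-approximation compatibility; moreover if α is faithful on E in the sense that for g ∈ F∖{1} there exists x ∈ E with α(g)x ≠ x and α(g)x, x ∈ E, then additionally d(1, φ(g)) can be taken > 1 − 3ε for all such g. -/
open scoped Classical Pointwise

/-!
A point `s` of the good set `S` fixed by `φ g` would give, by compatibility applied to `α g x`,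
`π s (α g x) = π s x`, contradicting the injectivity of `π s` on `E`. So `φ g` moves all of `S`,
and `|S| > (1 - ε) n` already yields `d(1, φ g) > 1 - ε > 1 - 3ε`.
-/

theorem lt_hDist_one_of_forall_apply_ne {n : ℕ} {σ : Equiv.Perm (Fin n)} {S : Finset (Fin n)}
    {c : ℝ} (hS : c * n < S.card) (hmove : ∀ s ∈ S, σ s ≠ s) : c < hDist 1 σ := by
  have hn : (0 : ℝ) < n := by
    rcases Nat.eq_zero_or_pos n with rfl | hn
    · simp [Finset.card_eq_zero.mpr (Finset.eq_empty_of_isEmpty S)] at hS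
    · exact_mod_cast hn
  have hsub : S ⊆ Finset.univ.filter fun a => (1 : Equiv.Perm (Fin n)) a ≠ σ a := fun s hs =>
    Finset.mem_filter.mpr ⟨Finset.mem_univ s, (hmove s hs).symm⟩
  rw [hDist, Fintype.card_fin, lt_div_iff₀ hn]
  exact hS.trans_le (by exact_mod_cast Finset.card_le_card hsub)

theorem IsOrbitApprox.lt_hDist_one {G X : Type*} [Group G] {n : ℕ} {α : G →* Equiv.Perm X}
    {F : Finset G} {E : Finset X} {ε : ℝ} {φ : G → Equiv.Perm (Fin n)}
    (hφ : IsOrbitApprox α F E ε φ) {g : G} (hg : g ∈ F)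
    (hmoved : ∃ x ∈ E, α g x ≠ x ∧ α g x ∈ E) : 1 - ε < hDist 1 (φ g) := by
  obtain ⟨m, S, π, hS, hinj, hcompat⟩ := hφ
  obtain ⟨x, hxE, hne, hgxE⟩ := hmoved
  refine lt_hDist_one_of_forall_apply_ne hS fun s hs hfix => hne (hinj s hs hgxE hxE ?_)
  have hback : α g⁻¹ (α g x) = x := by simp
  have hfixS : φ g s ∈ S := hfix.symm ▸ hs
  have h := hcompat s hs g hg (α g x) hgxE hfixS (by rwa [hback])
  rwa [hfix, hback] at h

theorem stmt_17_general {G X : Type*} [Group G]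
    (α : G →* Equiv.Perm X) (hα : SoficAction α)
    (ε : ℝ) (hε : 0 < ε)
    (F : Finset G)
    (E : Finset X) :
    ∃ (n : ℕ) (φ : G → Equiv.Perm (Fin n)),
      φ 1 = 1 ∧
      (∀ g ∈ F, ∀ h ∈ F, hDist (φ (g * h)) (φ g * φ h) < ε) ∧
      ∃ (m : ℕ) (S : Finset (Fin n)) (π : Fin n → X → Fin m),
        ((S.card : ℝ) > (1 - ε) * (n : ℝ)) ∧
        (∀ s ∈ S, Set.InjOn (π s) (E : Set X)) ∧
        (∀ s ∈ S, ∀ g ∈ F, ∀ x ∈ E, φ g s ∈ S → α g⁻¹ x ∈ E →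
          π (φ g s) x = π s (α g⁻¹ x)) ∧
        (∀ g ∈ F, g ≠ 1 → (∃ x ∈ E, α g x ≠ x ∧ α g x ∈ E) →
          hDist 1 (φ g) > 1 - 3 * ε) := by
  obtain ⟨n, φ, h1, hmult, hφ⟩ := hα F E ε hε
  have hfar := @hφ.lt_hDist_one
  obtain ⟨m, S, π, hS, hinj, hcompat⟩ := hφ
  exact ⟨n, φ, h1, hmult, m, S, π, hS, hinj, hcompat,
    fun g hg _ hmoved => by linarith [hfar hg hmoved]⟩

theorem stmt_17 {G X : Type*} [Group G] [Countable G] [Countable X]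
    (α : G →* Equiv.Perm X) (hα : SoficAction α)
    (ε : ℝ) (hε : 0 < ε)
    (F : Finset G) (hsym : ∀ g ∈ F, g⁻¹ ∈ F) (h1F : (1 : G) ∈ F)
    (E : Finset X) :
    ∃ (n : ℕ) (φ : G → Equiv.Perm (Fin n)),
      φ 1 = 1 ∧
      (∀ g ∈ F, ∀ h ∈ F, hDist (φ (g * h)) (φ g * φ h) < ε) ∧
      ∃ (m : ℕ) (S : Finset (Fin n)) (π : Fin n → X → Fin m),
        ((S.card : ℝ) > (1 - ε) * (n : ℝ)) ∧
        (∀ s ∈ S, Set.InjOn (π s) (E : Set X)) ∧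
        (∀ s ∈ S, ∀ g ∈ F, ∀ x ∈ E, φ g s ∈ S → α g⁻¹ x ∈ E →
          π (φ g s) x = π s (α g⁻¹ x)) ∧
        (∀ g ∈ F, g ≠ 1 → (∃ x ∈ E, α g x ≠ x ∧ α g x ∈ E) →
          hDist 1 (φ g) > 1 - 3 * ε) :=
  stmt_17_general α hα ε hε F E
end
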